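/- arXiv:2509.02604 — 7 statements merged into one kernel-verified Lean document; each statement's English description precedes it below -/
import Mathlib

section
/- (Kelly's lemma) If G and H are hypomorphic finite simple graphs on n vertices, then for every finite simple graph F with fewer than n vertices, the subgraph count ⟨G,F⟩ equals ⟨H,F⟩. -/
open SimpleGraph

/-- Two graphs are hypomorphic when there is a bijection `r` such that every
vertex-deleted induced subgraph `G - v` is isomorphic to `H - r v`. -/
def Hypomorphic {V W : Type*} (G : SimpleGraph V) (H : SimpleGraph W) : Prop :=
  ∃ r : V ≃ W, ∀ v : V, Nonempty (G.induce {u | u ≠ v} ≃g H.induce {u | u ≠ r v})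

/-- The number of subgraphs of `G` (a vertex subset together with an edge
subset with endpoints in it) whose underlying graph is isomorphic to `F`. -/
noncomputable def subCount {V U : Type*} (G : SimpleGraph V) (F : SimpleGraph U) : ℕ :=
  Nat.card {B : G.Subgraph // Nonempty (B.coe ≃g F)}

section Aux

variable {V V' U : Type*}

lemma relmap_iff {r : V → V → Prop} {f : V → V'} (hf : Function.Injective f) (a b : V) :
    Relation.Map r f f (f a) (f b) ↔ r a b := by
  constructor
  · rintro ⟨u, v, h, hu, hv⟩
    rwa [hf hu, hf hv] at h
  · intro h; exact ⟨a, b, h, rfl, rfl⟩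

/-- `Subgraph.map` along an embedding gives an isomorphic subgraph. -/
noncomputable def mapIso {G : SimpleGraph V} {G' : SimpleGraph V'} (f : G ↪g G')
    (B : G.Subgraph) : B.coe ≃g (B.map f.toHom).coe where
  toEquiv := Equiv.Set.image f B.verts f.injective
  map_rel_iff' := by
    rintro ⟨a, ha⟩ ⟨b, hb⟩
    simp only [Equiv.Set.image, Equiv.Set.imageOfInjOn, Subgraph.coe_adj, Subgraph.map_adj]
    exact relmap_iff f.injective a b

lemma map_emb_injective {G : SimpleGraph V} {G' : SimpleGraph V'} (f : G ↪g G') :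
    Function.Injective (Subgraph.map f.toHom : G.Subgraph → G'.Subgraph) := by
  intro B₁ B₂ h
  ext a b
  · constructor <;> intro ha
    · have : f a ∈ (B₂.map f.toHom).verts := by rw [← h]; exact ⟨a, ha, rfl⟩
      obtain ⟨c, hc, hca⟩ := this
      rwa [← f.injective hca]
    · have : f a ∈ (B₁.map f.toHom).verts := by rw [h]; exact ⟨a, ha, rfl⟩
      obtain ⟨c, hc, hca⟩ := this
      rwa [← f.injective hca]
  · have h2 := congrArg Subgraph.Adj h
    have e1 := relmap_iff (r := B₁.Adj) f.injective a b
    have e2 := relmap_iff (r := B₂.Adj) f.injective a b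
    rw [show Relation.Map B₁.Adj f f = Relation.Map B₂.Adj f f from h2] at e1
    rw [← e1, e2]

lemma map_comap_emb {G : SimpleGraph V} {G' : SimpleGraph V'} (f : G ↪g G')
    (B' : G'.Subgraph) (hB' : (B'.verts : Set V') ⊆ Set.range f) :
    (B'.comap f.toHom).map f.toHom = B' := by
  ext a b
  · simp only [Subgraph.map_verts, Subgraph.comap_verts, Set.mem_image, Set.mem_preimage]
    constructor
    · rintro ⟨c, hc, rfl⟩; exact hc
    · intro ha
      obtain ⟨c, rfl⟩ := hB' ha
      exact ⟨c, ha, rfl⟩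
  · simp only [Subgraph.map_adj, Relation.Map, Subgraph.comap_adj]
    constructor
    · rintro ⟨u, v, ⟨-, h⟩, rfl, rfl⟩; exact h
    · intro h
      obtain ⟨u, rfl⟩ := hB' (B'.edge_vert h)
      obtain ⟨v, rfl⟩ := hB' (B'.edge_vert h.symm)
      exact ⟨u, v, ⟨f.map_rel_iff.mp (B'.adj_sub h), h⟩, rfl, rfl⟩

/-- Key relabeling lemma. -/
lemma count_embed {G : SimpleGraph V} {G' : SimpleGraph V'} (F : SimpleGraph U) (f : G ↪g G') :
    Nat.card {B' : G'.Subgraph // Nonempty (B'.coe ≃g F) ∧ (B'.verts : Set V') ⊆ Set.range f}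
      = subCount G F := by
  apply Nat.card_congr
  apply Equiv.symm
  refine Equiv.ofBijective (fun B =>
      ⟨B.1.map f.toHom, ⟨(mapIso f B.1).symm.trans B.2.some⟩, ?_⟩) ⟨?_, ?_⟩
  · rintro _ ⟨a, -, rfl⟩; exact ⟨a, rfl⟩
  · intro B₁ B₂ h
    exact Subtype.ext (map_emb_injective f (congrArg Subtype.val h))
  · rintro ⟨B', ⟨e⟩, hB'⟩
    refine ⟨⟨B'.comap f.toHom, ?_⟩, Subtype.ext (map_comap_emb f B' hB')⟩
    have g := mapIso f (B'.comap f.toHom)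
    rw [map_comap_emb f B' hB'] at g
    exact ⟨g.trans e⟩

lemma subCount_iso {G : SimpleGraph V} {G' : SimpleGraph V'} (F : SimpleGraph U)
    (e : G ≃g G') : subCount G F = subCount G' F := by
  rw [← count_embed F e.toEmbedding]
  unfold subCount
  apply Nat.card_congr
  apply Equiv.subtypeEquivRight
  intro B'
  have : Set.range (⇑e.toEmbedding) = Set.univ := Set.range_eq_univ.mpr e.surjective
  simp [this]

noncomputable def subgraphFintype (G : SimpleGraph V) [Fintype V] : Fintype G.Subgraph := by
  classical
  exact Fintype.ofInjective (fun B => (B.verts, B.Adj))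
    (fun B₁ B₂ h => Subgraph.ext (congrArg Prod.fst h) (congrArg Prod.snd h))

lemma sum_deleted [Fintype V] [Fintype U] (G : SimpleGraph V) (F : SimpleGraph U) :
    ∑ v : V, subCount (G.induce {u | u ≠ v}) F
      = (Fintype.card V - Fintype.card U) * subCount G F := by
  classical
  have : Fintype G.Subgraph := subgraphFintype G
  set s : Finset G.Subgraph := Finset.univ.filter (fun B => Nonempty (B.coe ≃g F)) with hs
  have hsub : subCount G F = s.card := by
    rw [subCount, Nat.card_eq_fintype_card, Fintype.card_subtype]
  have h1 : ∀ v : V, subCount (G.induce {u | u ≠ v}) F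
      = (s.filter (fun B => v ∉ B.verts)).card := by
    intro v
    rw [← count_embed F (SimpleGraph.Embedding.induce (G := G) {u | u ≠ v}),
      Nat.card_eq_fintype_card, Fintype.card_subtype, hs, Finset.filter_filter]
    have hrange : Set.range (⇑(SimpleGraph.Embedding.induce (G := G) {u | u ≠ v}))
        = {u | u ≠ v} := Subtype.range_coe
    congr 1
    apply Finset.filter_congr
    intro B _
    rw [hrange]
    constructor
    · rintro ⟨h1, h2⟩
      exact ⟨h1, fun hv => h2 hv rfl⟩
    · rintro ⟨h1, h2⟩
      refine ⟨h1, fun u hu hueq => ?_⟩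
      exact h2 (hueq ▸ hu)
  calc ∑ v : V, subCount (G.induce {u | u ≠ v}) F
      = ∑ v : V, ∑ B ∈ s, if v ∉ B.verts then 1 else 0 := by
        simp only [h1, Finset.card_filter]
    _ = ∑ B ∈ s, ∑ v : V, if v ∉ B.verts then 1 else 0 := Finset.sum_comm
    _ = ∑ B ∈ s, (Fintype.card V - Fintype.card U) := by
        apply Finset.sum_congr rfl
        intro B hB
        rw [hs, Finset.mem_filter] at hB
        obtain ⟨-, ⟨e⟩⟩ := hB
        rw [← Finset.card_filter]
        have h2 : Finset.univ.filter (fun v => v ∉ B.verts) = B.verts.toFinsetᶜ := by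
          ext u; simp
        rw [h2, Finset.card_compl, Set.toFinset_card, Fintype.card_congr e.toEquiv]
    _ = (Fintype.card V - Fintype.card U) * subCount G F := by
        rw [Finset.sum_const, smul_eq_mul, hsub, mul_comm]

end Aux

/-- Kelly's lemma: subgraph counts of graphs with fewer than `n` vertices are
reconstructible. -/
theorem kellys_lemma {V W U : Type*} [Fintype V] [Fintype W] [Fintype U]
    (G : SimpleGraph V) (H : SimpleGraph W) (F : SimpleGraph U)
    (hhyp : Hypomorphic G H)
    (hlt : Fintype.card U < Fintype.card V) :
    subCount G F = subCount H F := by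
  obtain ⟨r, hr⟩ := hhyp
  have hcard : Fintype.card W = Fintype.card V := (Fintype.card_congr r).symm
  have key : ∑ v : V, subCount (G.induce {u | u ≠ v}) F
      = ∑ v : V, subCount (H.induce {u | u ≠ r v}) F :=
    Finset.sum_congr rfl fun v _ => subCount_iso F (hr v).some
  have hre : ∑ v : V, subCount (H.induce {u | u ≠ r v}) F
      = ∑ w : W, subCount (H.induce {u | u ≠ w}) F :=
    r.sum_comp (fun w => subCount (H.induce {u | u ≠ w}) F)
  rw [sum_deleted G F, hre, sum_deleted H F, hcard] at key
  exact Nat.eq_of_mul_eq_mul_left (Nat.sub_pos_of_lt hlt) key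
end

section
/- (Weinstein's lemma, labeled form) Let G and H be hypomorphic finite simple graphs on n vertices. Let W be a finite vertex type with |W| < n, and let R and B be simple graphs on W with disjoint edge sets (a 'red' pattern and a 'blue' pattern). Then the number of injective maps f : W → V(G) such that every edge {a,b} of R maps to an edge {f(a),f(b)} of G and every edge {a,b} of B maps to a non-edge of G equals the corresponding number of such injective maps into H. -/
open SimpleGraph

/-- The number of injective maps from the pattern vertex type `A` into the
vertices of `G` sending every red edge (edge of `R`) to an edge of `G` and
every blue edge (edge of `B`) to a non-edge of `G`. -/
noncomputable def patternCount {A V : Type*} (R B : SimpleGraph A) (G : SimpleGraph V) : ℕ :=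
  Nat.card {f : A ↪ V // (∀ a b, R.Adj a b → G.Adj (f a) (f b)) ∧
      (∀ a b, B.Adj a b → ¬ G.Adj (f a) (f b))}

lemma patternCount_congr {A V W : Type*} (R B : SimpleGraph A) {G : SimpleGraph V}
    {H : SimpleGraph W} (e : G ≃g H) : patternCount R B G = patternCount R B H := by
  apply Nat.card_congr
  refine Equiv.subtypeEquiv (Equiv.embeddingCongr (Equiv.refl A) e.toEquiv) (fun f => ?_)
  have h : ∀ a : A, (Equiv.embeddingCongr (Equiv.refl A) e.toEquiv f) a = e (f a) := by
    intro a; simp [Equiv.embeddingCongr_apply_trans]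
  constructor <;> rintro ⟨h1, h2⟩ <;> constructor <;> intro a b hab
  · rw [h a, h b, e.map_adj_iff]; exact h1 a b hab
  · rw [h a, h b, e.map_adj_iff]; exact h2 a b hab
  · have := h1 a b hab; rwa [h a, h b, e.map_adj_iff] at this
  · have := h2 a b hab; rwa [h a, h b, e.map_adj_iff] at this

noncomputable def keyEquiv {A V : Type*} (R B : SimpleGraph A) (G : SimpleGraph V) :
    (Σ v : V, {f : A ↪ ↥{u | u ≠ v} // (∀ a b, R.Adj a b → (G.induce {u | u ≠ v}).Adj (f a) (f b)) ∧
      (∀ a b, B.Adj a b → ¬ (G.induce {u | u ≠ v}).Adj (f a) (f b))}) ≃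
    (Σ f : {f : A ↪ V // (∀ a b, R.Adj a b → G.Adj (f a) (f b)) ∧
      (∀ a b, B.Adj a b → ¬ G.Adj (f a) (f b))}, {v : V // v ∉ Set.range f.1}) where
  toFun p := ⟨⟨p.2.1.trans (Function.Embedding.subtype _),
      ⟨fun a b hab => by simpa using p.2.2.1 a b hab,
       fun a b hab => by simpa using p.2.2.2 a b hab⟩⟩,
    ⟨p.1, by rintro ⟨a, ha⟩; exact (p.2.1 a).2 ha⟩⟩
  invFun q := ⟨q.2.1, ⟨Function.Embedding.codRestrict _ q.1.1
      (fun a => fun h => q.2.2 ⟨a, h⟩),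
      ⟨fun a b hab => by simpa using q.1.2.1 a b hab,
       fun a b hab => by simpa using q.1.2.2 a b hab⟩⟩⟩
  left_inv p := by
    rcases p with ⟨v, f, hf⟩
    refine Sigma.ext rfl (heq_of_eq ?_)
    ext a
    rfl
  right_inv q := by
    rcases q with ⟨⟨f, hf⟩, v, hv⟩
    rfl

lemma natCard_sigma' {ι : Type*} [Fintype ι] (α : ι → Type*) [∀ i, Finite (α i)] :
    Nat.card (Σ i, α i) = ∑ i, Nat.card (α i) := by
  haveI : ∀ i, Fintype (α i) := fun i => Fintype.ofFinite (α i)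
  simp [Nat.card_eq_fintype_card, Fintype.card_sigma]

lemma key_count {A : Type*} {V' : Type*} [Fintype A] [Fintype V'] (R B : SimpleGraph A)
    (G' : SimpleGraph V') :
    (∑ v : V', patternCount R B (G'.induce {u | u ≠ v})) =
      (Fintype.card V' - Fintype.card A) * patternCount R B G' := by
  classical
  have h1 : (∑ v : V', patternCount R B (G'.induce {u | u ≠ v})) =
      Nat.card (Σ v : V', {f : A ↪ ↥{u | u ≠ v} //
        (∀ a b, R.Adj a b → (G'.induce {u | u ≠ v}).Adj (f a) (f b)) ∧
        (∀ a b, B.Adj a b → ¬ (G'.induce {u | u ≠ v}).Adj (f a) (f b))}) := by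
    simp only [patternCount]
    rw [natCard_sigma']
  rw [h1, Nat.card_congr (keyEquiv R B G'), natCard_sigma']
  have h2 : ∀ f : {f : A ↪ V' // (∀ a b, R.Adj a b → G'.Adj (f a) (f b)) ∧
      (∀ a b, B.Adj a b → ¬ G'.Adj (f a) (f b))},
      Nat.card {v : V' // v ∉ Set.range f.1} = Fintype.card V' - Fintype.card A := by
    intro f
    rw [Nat.card_eq_fintype_card, Fintype.card_subtype_compl]
    congr 1
    rw [← Fintype.card_range f.1]
  simp only [h2]
  rw [Finset.sum_const, smul_eq_mul, Finset.card_univ, patternCount,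
    Nat.card_eq_fintype_card, mul_comm]

/-- Weinstein's lemma (labeled form): counts of injective embeddings of an
edge-2-colored pattern on fewer than `n` vertices, with red edges going to
edges and blue edges going to non-edges, are reconstructible. -/
theorem weinstein_lemma {V W A : Type*} [Fintype V] [Fintype W] [Fintype A]
    (G : SimpleGraph V) (H : SimpleGraph W) (R B : SimpleGraph A)
    (hdisj : ∀ a b, ¬ (R.Adj a b ∧ B.Adj a b))
    (hhyp : Hypomorphic G H)
    (hlt : Fintype.card A < Fintype.card V) :
    patternCount R B G = patternCount R B H := by
  classical
  obtain ⟨r, hr⟩ := hhyp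
  have hcardVW : Fintype.card V = Fintype.card W := Fintype.card_congr r
  have sumEq : (∑ v : V, patternCount R B (G.induce {u | u ≠ v})) =
      (∑ w : W, patternCount R B (H.induce {u | u ≠ w})) := by
    rw [← r.sum_comp (fun w => patternCount R B (H.induce {u | u ≠ w}))]
    exact Finset.sum_congr rfl (fun v _ => patternCount_congr R B (hr v).some)
  have kG := key_count R B G
  have kH := key_count R B H
  rw [kG, kH, hcardVW] at sumEq
  exact Nat.eq_of_mul_eq_mul_left (by omega) sumEq
end

section
/- (Kocay's lemma, ungrouped form) Let G be a finite simple graph and let F = (F₁,…,F_k) be a finite sequence of finite simple graphs. Then the product over i = 1,…,k of the subgraph counts ⟨G,Fᵢ⟩ equals the sum, over all subgraphs X of G, of the number of covers of X by F. -/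
open SimpleGraph

/-- The number of covers of the graph `X` by the sequence `F = (F 0, …, F (k-1))`:
tuples `(B 0, …, B (k-1))` of subgraphs of `X` with `B i ≅ F i` for every `i`
whose union (of vertex sets and edge sets) is all of `X`. -/
noncomputable def coverCount {V : Type*} (X : SimpleGraph V) {k : ℕ} {U : Fin k → Type*}
    (F : ∀ i, SimpleGraph (U i)) : ℕ :=
  Nat.card {B : Fin k → X.Subgraph //
    (∀ i, Nonempty ((B i).coe ≃g F i)) ∧ (⨆ i, B i) = ⊤}

section Aux

variable {V W : Type*} {G : SimpleGraph V}

instance finiteSubgraph [Finite V] : Finite G.Subgraph :=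
  Finite.of_injective (fun H : G.Subgraph => (H.verts, H.Adj))
    (fun H1 H2 h => by cases H1; cases H2; simp_all)

/-- The coe of a mapped subgraph along an injective hom is isomorphic to the coe
of the original subgraph. -/
noncomputable def subgraphIsoMap {G' : SimpleGraph W} (f : G →g G') (hf : Function.Injective f)
    (H : G.Subgraph) : (H.map f).coe ≃g H.coe where
  toEquiv := (Equiv.Set.image f H.verts hf).symm
  map_rel_iff' := by
    rintro ⟨a, ha⟩ ⟨b, hb⟩
    simp only [Subgraph.coe_adj, Subgraph.map_adj, Relation.Map]
    set ea := ((Equiv.Set.image f H.verts hf).symm ⟨a, ha⟩) with hea_def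
    set eb := ((Equiv.Set.image f H.verts hf).symm ⟨b, hb⟩) with heb_def
    have hea : f ea = a :=
      congrArg Subtype.val ((Equiv.Set.image f H.verts hf).apply_symm_apply ⟨a, ha⟩)
    have heb : f eb = b :=
      congrArg Subtype.val ((Equiv.Set.image f H.verts hf).apply_symm_apply ⟨b, hb⟩)
    constructor
    · intro h
      exact ⟨ea, eb, h, hea, heb⟩
    · rintro ⟨u, v, huv, hu, hv⟩
      have h1 : (ea : V) = u := hf (by rw [hea, hu])
      have h2 : (eb : V) = v := hf (by rw [heb, hv])
      rw [← h1, ← h2] at huv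
      exact huv

lemma subgraph_map_iSup {G' : SimpleGraph W} (f : G →g G') {ι : Type*} (H : ι → G.Subgraph) :
    (⨆ i, H i).map f = ⨆ i, (H i).map f := by
  ext v w
  · simp [Subgraph.verts_iSup, Set.image_iUnion]
  · simp only [Subgraph.map_adj, Subgraph.iSup_adj, Relation.Map]
    tauto

lemma coeSubgraph_top (X : G.Subgraph) :
    SimpleGraph.Subgraph.coeSubgraph (⊤ : X.coe.Subgraph) = X := by
  ext v w
  · simp
  · simp only [Subgraph.map_adj, Relation.Map, Subgraph.top_adj, Subgraph.coe_adj]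
    constructor
    · rintro ⟨a, b, h, rfl, rfl⟩; exact h
    · intro h; exact ⟨⟨v, X.edge_vert h⟩, ⟨w, X.edge_vert h.symm⟩, h, rfl, rfl⟩

lemma hom_injective (X : G.Subgraph) : Function.Injective X.hom := Subtype.val_injective

/-- The isomorphism `(coeSubgraph C).coe ≃g C.coe`. -/
noncomputable def coeSubgraphIso' {X : G.Subgraph} (C : X.coe.Subgraph) :
    (SimpleGraph.Subgraph.coeSubgraph C).coe ≃g C.coe :=
  subgraphIsoMap X.hom (hom_injective X) C

/-- The fiber of the "union" map over `X` is equivalent to the set of covers of `X`. -/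
noncomputable def fiberEquiv {k : ℕ} {U : Fin k → Type*} (F : ∀ i, SimpleGraph (U i))
    (X : G.Subgraph) :
    {B : ∀ _ : Fin k, {H : G.Subgraph // Nonempty (H.coe ≃g F _)} //
        (⨆ i, ((B i : {H : G.Subgraph // Nonempty (H.coe ≃g F i)}) : G.Subgraph)) = X} ≃
    {B : Fin k → X.coe.Subgraph //
        (∀ i, Nonempty ((B i).coe ≃g F i)) ∧ (⨆ i, B i) = ⊤} where
  toFun := fun ⟨B, hB⟩ => by
    have hle : ∀ i, ((B i : _) : G.Subgraph) ≤ X := fun i => hB ▸ le_iSup (fun i => ((B i : _) : G.Subgraph)) i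
    have hres : ∀ i, SimpleGraph.Subgraph.coeSubgraph (X.restrict ((B i : _) : G.Subgraph))
        = ((B i : _) : G.Subgraph) := fun i => by
      rw [Subgraph.coeSubgraph_restrict_eq]
      exact inf_eq_right.mpr (hle i)
    refine ⟨fun i => X.restrict ((B i : _) : G.Subgraph), fun i => ?_, ?_⟩
    · have h2 : Nonempty ((SimpleGraph.Subgraph.coeSubgraph
          (X.restrict ((B i : _) : G.Subgraph))).coe ≃g F i) := by
        rw [hres i]; exact (B i).2
      exact ⟨(coeSubgraphIso' _).symm.trans h2.some⟩
    · apply Subgraph.coeSubgraph_injective X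
      rw [show SimpleGraph.Subgraph.coeSubgraph (G' := X)
            = Subgraph.map X.hom from rfl,
          subgraph_map_iSup]
      have : (⨆ i, (X.restrict ((B i : _) : G.Subgraph)).map X.hom)
          = ⨆ i, ((B i : _) : G.Subgraph) := by
        refine iSup_congr fun i => hres i
      rw [this, hB]
      exact (coeSubgraph_top X).symm
  invFun := fun ⟨C, h1, h2⟩ => by
    refine ⟨fun i => ⟨SimpleGraph.Subgraph.coeSubgraph (C i),
      ⟨(coeSubgraphIso' (C i)).trans (h1 i).some⟩⟩, ?_⟩
    rw [show (⨆ i, SimpleGraph.Subgraph.coeSubgraph (C i))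
          = SimpleGraph.Subgraph.coeSubgraph (⨆ i, C i) from (subgraph_map_iSup X.hom C).symm,
        h2, coeSubgraph_top]
  left_inv := by
    rintro ⟨B, hB⟩
    have hle : ∀ i, ((B i : _) : G.Subgraph) ≤ X := fun i => hB ▸ le_iSup (fun i => ((B i : _) : G.Subgraph)) i
    apply Subtype.ext
    funext i
    apply Subtype.ext
    show SimpleGraph.Subgraph.coeSubgraph (X.restrict ((B i : _) : G.Subgraph))
        = ((B i : _) : G.Subgraph)
    rw [Subgraph.coeSubgraph_restrict_eq]
    exact inf_eq_right.mpr (hle i)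
  right_inv := by
    rintro ⟨C, h1, h2⟩
    apply Subtype.ext
    funext i
    show X.restrict (SimpleGraph.Subgraph.coeSubgraph (C i)) = C i
    exact Subgraph.restrict_coeSubgraph (C i)

end Aux

/-- Kocay's lemma (ungrouped form): the product of the subgraph counts of the
`F i` in `G` equals the sum over all subgraphs `X` of `G` of the number of
covers of `X` by `F`. -/
theorem kocays_lemma {V : Type*} [Fintype V] (G : SimpleGraph V)
    {k : ℕ} {U : Fin k → Type*} [∀ i, Fintype (U i)] (F : ∀ i, SimpleGraph (U i)) :
    (∏ i, subCount G (F i)) = ∑ᶠ X : G.Subgraph, coverCount X.coe F := by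
  classical
  letI : Fintype G.Subgraph := Fintype.ofFinite _
  have h1 : (∏ i, subCount G (F i))
      = Nat.card (∀ i, {B : G.Subgraph // Nonempty (B.coe ≃g F i)}) := by
    rw [Nat.card_pi]
    rfl
  have h2 : Nat.card (∀ i, {B : G.Subgraph // Nonempty (B.coe ≃g F i)})
      = Nat.card (Σ X : G.Subgraph,
        {B : ∀ _ : Fin k, {H : G.Subgraph // Nonempty (H.coe ≃g F _)} //
          (⨆ i, ((B i : {H : G.Subgraph // Nonempty (H.coe ≃g F i)}) : G.Subgraph)) = X}) :=
    (Nat.card_congr (Equiv.sigmaFiberEquiv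
      (fun B : ∀ i, {H : G.Subgraph // Nonempty (H.coe ≃g F i)} =>
        ⨆ i, ((B i : _) : G.Subgraph)))).symm
  rw [h1, h2]
  rw [finsum_eq_sum_of_fintype]
  rw [Nat.card_eq_fintype_card, Fintype.card_sigma]
  refine Finset.sum_congr rfl fun X _ => ?_
  rw [← Nat.card_eq_fintype_card]
  exact Nat.card_congr (fiberEquiv F X)
end

section
/- Let n > 4 and let G be a connected finite simple graph on n vertices whose edge set is the union of two matchings M₁ and M₂ with |M₁| = ⌈(n−1)/2⌉ and |M₂| = ⌊(n−1)/2⌋. Then G is isomorphic to the path graph P_n on n vertices. -/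
open SimpleGraph

/-- `M` is a matching (set of pairwise disjoint edges) in the graph `G`. -/
def IsMatchingSet {V : Type*} (G : SimpleGraph V) (M : Set (Sym2 V)) : Prop :=
  M ⊆ G.edgeSet ∧ M.Pairwise fun e f => ∀ v, v ∈ e → v ∉ f

namespace UMPaux

variable {V : Type*} {G : SimpleGraph V}

lemma getVert_mem_support {u v : V} (p : G.Walk u v) {i : ℕ} (hi : i ≤ p.length) :
    p.getVert i ∈ p.support :=
  SimpleGraph.Walk.mem_support_iff_exists_getVert.2 ⟨i, rfl, hi⟩

lemma getVert_inj {u v : V} (p : G.Walk u v) :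
    p.IsPath → ∀ i j, i ≤ p.length → j ≤ p.length →
      p.getVert i = p.getVert j → i = j := by
  induction p with
  | nil => intro _ i j hi hj _; simp only [Walk.length_nil, Nat.le_zero] at hi hj; omega
  | @cons a b c h q ih =>
    intro hp i j hi hj hij
    rw [Walk.cons_isPath_iff] at hp
    match i, j with
    | 0, 0 => rfl
    | 0, j+1 =>
      exfalso
      rw [Walk.getVert_zero, Walk.getVert_cons_succ] at hij
      exact hp.2 (by rw [hij]; exact getVert_mem_support q (by
        simpa [Nat.succ_le_succ_iff] using hj))
    | i+1, 0 =>
      exfalso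
      rw [Walk.getVert_zero, Walk.getVert_cons_succ] at hij
      exact hp.2 (by rw [← hij]; exact getVert_mem_support q (by
        simpa [Nat.succ_le_succ_iff] using hi))
    | i+1, j+1 =>
      rw [Walk.getVert_cons_succ, Walk.getVert_cons_succ] at hij
      have := ih hp.1 i j (by simpa [Nat.succ_le_succ_iff] using hi)
        (by simpa [Nat.succ_le_succ_iff] using hj) hij
      omega

lemma mem_edges_exists {u v : V} (p : G.Walk u v) :
    ∀ e ∈ p.edges, ∃ i, i < p.length ∧ e = s(p.getVert i, p.getVert (i+1)) := by
  induction p with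
  | nil => simp
  | @cons a b c h q ih =>
    intro e he
    rw [Walk.edges_cons, List.mem_cons] at he
    rcases he with rfl | he
    · exact ⟨0, by simp, by
        rw [Walk.getVert_zero, Walk.getVert_cons_succ, Walk.getVert_zero]⟩
    · obtain ⟨i, hi, hei⟩ := ih e he
      exact ⟨i+1, by simp only [Walk.length_cons]; omega, by
        rw [Walk.getVert_cons_succ, Walk.getVert_cons_succ]; exact hei⟩

lemma no_three {M₁ M₂ : Set (Sym2 V)}
    (hM₁ : IsMatchingSet G M₁) (hM₂ : IsMatchingSet G M₂)
    (hunion : G.edgeSet = M₁ ∪ M₂) {v a b c : V}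
    (hab : a ≠ b) (hac : a ≠ c) (hbc : b ≠ c)
    (ha : G.Adj v a) (hb : G.Adj v b) (hc : G.Adj v c) : False := by
  have key : ∀ (M : Set (Sym2 V)), IsMatchingSet G M → ∀ x y : V, x ≠ y →
      s(v,x) ∈ M → s(v,y) ∈ M → False := by
    intro M hM x y hxy hx hy
    have hne : s(v,x) ≠ s(v,y) := by
      intro h
      rw [Sym2.eq_iff] at h
      rcases h with ⟨-, h⟩ | ⟨h1, h2⟩
      · exact hxy h
      · exact hxy (h2.trans h1)
    exact hM.2 hx hy hne v (Sym2.mem_mk_left v x) (Sym2.mem_mk_left v y)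
  have hmem : ∀ x, G.Adj v x → s(v,x) ∈ M₁ ∪ M₂ := by
    intro x hx
    rw [← hunion]
    exact G.mem_edgeSet.2 hx
  rcases hmem a ha with h1 | h1 <;> rcases hmem b hb with h2 | h2 <;>
    rcases hmem c hc with h3 | h3
  · exact key M₁ hM₁ a b hab h1 h2
  · exact key M₁ hM₁ a b hab h1 h2
  · exact key M₁ hM₁ a c hac h1 h3
  · exact key M₂ hM₂ b c hbc h2 h3
  · exact key M₁ hM₁ b c hbc h2 h3
  · exact key M₂ hM₂ a c hac h1 h3
  · exact key M₂ hM₂ a b hab h1 h2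
  · exact key M₂ hM₂ a b hab h1 h2

lemma exists_boundary {s : Set V} : ∀ {a b : V} (_ : G.Walk a b), a ∈ s → b ∉ s →
    ∃ x y, x ∈ s ∧ y ∉ s ∧ G.Adj x y := by
  intro a b q
  induction q with
  | nil => intro h h'; exact absurd h h'
  | @cons a c b h q ih =>
    intro ha hb
    by_cases hc : c ∈ s
    · exact ih hc hb
    · exact ⟨a, c, ha, hc, h⟩

end UMPaux

open UMPaux in
/-- A connected graph on `n > 4` vertices whose edge set is the union of a
matching of size `⌈(n-1)/2⌉` and a matching of size `⌊(n-1)/2⌋` is the path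
graph `P_n`. -/
theorem union_of_matchings_is_path {V : Type*} [Fintype V] {n : ℕ}
    (G : SimpleGraph V) (hn : Fintype.card V = n) (h4 : 4 < n)
    (hconn : G.Connected)
    (M₁ M₂ : Set (Sym2 V))
    (hM₁ : IsMatchingSet G M₁) (hM₂ : IsMatchingSet G M₂)
    (hcard₁ : M₁.ncard = (n - 1 + 1) / 2)  -- ⌈(n-1)/2⌉
    (hcard₂ : M₂.ncard = (n - 1) / 2)      -- ⌊(n-1)/2⌋
    (hunion : G.edgeSet = M₁ ∪ M₂) :
    Nonempty (G ≃g pathGraph n) := by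
  classical
  have hV : Nonempty V := by
    rw [← Fintype.card_pos_iff, hn]; omega
  obtain ⟨v0⟩ := hV
  -- longest path
  set S : Set ℕ := {l | ∃ (u v : V) (p : G.Walk u v), p.IsPath ∧ p.length = l} with hSdef
  have hS0 : 0 ∈ S := ⟨v0, v0, Walk.nil, Walk.IsPath.nil, rfl⟩
  have hSb : ∀ l ∈ S, l < n := by
    rintro l ⟨u, v, p, hp, rfl⟩
    rw [← hn]; exact hp.length_lt
  have hfin : S.Finite := Set.Finite.subset (Set.finite_Iio n) (fun l hl => hSb l hl)
  have hne : hfin.toFinset.Nonempty := ⟨0, hfin.mem_toFinset.2 hS0⟩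
  have hLS : hfin.toFinset.max' hne ∈ S := hfin.mem_toFinset.1 (hfin.toFinset.max'_mem hne)
  obtain ⟨u, v, p, hp, hpl⟩ := hLS
  have hmax : ∀ (a b : V) (q : G.Walk a b), q.IsPath → q.length ≤ p.length := by
    intro a b q hq
    rw [hpl]
    exact hfin.toFinset.le_max' _ (hfin.mem_toFinset.2 ⟨a, b, q, hq, rfl⟩)
  -- the longest path is Hamiltonian
  have hsupp : ∀ w, w ∈ p.support := by
    by_contra hcon
    push_neg at hcon
    obtain ⟨w, hw⟩ := hcon
    obtain ⟨q⟩ := hconn.preconnected u w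
    obtain ⟨x, y, hx, hy, hxy⟩ :=
      exists_boundary (s := {z | z ∈ p.support}) q (p.start_mem_support) hw
    obtain ⟨i, hiv, hil⟩ := Walk.mem_support_iff_exists_getVert.1 hx
    by_cases hi0 : i = 0
    · -- x is the start; extend the path
      have hxu : x = u := by rw [← hiv, hi0, Walk.getVert_zero]
      have hyu : G.Adj y u := hxu ▸ hxy.symm
      have hq : (Walk.cons hyu p).IsPath := hp.cons (by exact hy)
      have := hmax _ _ _ hq
      simp [Walk.length_cons] at this
    · by_cases hil' : i = p.length
      · -- x is the end; extend the reversed path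
        have hxv : x = v := by rw [← hiv, hil', Walk.getVert_length]
        have hyv : G.Adj y v := hxv ▸ hxy.symm
        have hq : (Walk.cons hyv p.reverse).IsPath := hp.reverse.cons (by
          rw [Walk.support_reverse, List.mem_reverse]; exact hy)
        have := hmax _ _ _ hq
        simp [Walk.length_cons] at this
      · -- x is interior: it would have three neighbours
        have h1 : i - 1 < p.length := by omega
        have h2 : i < p.length := by omega
        have ha : G.Adj x (p.getVert (i-1)) := by
          have := p.adj_getVert_succ h1
          rw [show i - 1 + 1 = i by omega, hiv] at this
          exact this.symm
        have hb : G.Adj x (p.getVert (i+1)) := by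
          have := p.adj_getVert_succ h2
          rw [hiv] at this
          exact this
        have hab : p.getVert (i-1) ≠ p.getVert (i+1) := by
          intro h
          have := getVert_inj p hp (i-1) (i+1) (by omega) (by omega) h
          omega
        have hay : p.getVert (i-1) ≠ y := by
          intro h
          exact hy (h ▸ getVert_mem_support p (by omega))
        have hby : p.getVert (i+1) ≠ y := by
          intro h
          exact hy (h ▸ getVert_mem_support p (by omega))
        exact no_three hM₁ hM₂ hunion hab hay hby ha hb hxy
  have hham : p.IsHamiltonian := hp.isHamiltonian_of_mem hsupp
  have hlen : p.length = n - 1 := by rw [hham.length_eq, hn]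
  -- edge counting: the edges of `p` are all the edges of `G`
  have hEcard : G.edgeFinset.card ≤ n - 1 := by
    have h1 : G.edgeFinset.card = G.edgeSet.ncard := by
      rw [← Set.ncard_coe_finset, coe_edgeFinset]
    rw [h1, hunion]
    calc (M₁ ∪ M₂).ncard ≤ M₁.ncard + M₂.ncard := Set.ncard_union_le _ _
      _ = n - 1 := by rw [hcard₁, hcard₂]; omega
  have hnodup : p.edges.Nodup := hp.isTrail.edges_nodup
  have hcards : p.edges.toFinset.card = n - 1 := by
    rw [List.toFinset_card_of_nodup hnodup, Walk.length_edges, hlen]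
  have hsub : p.edges.toFinset ⊆ G.edgeFinset := by
    intro e he
    rw [List.mem_toFinset] at he
    exact mem_edgeFinset.2 (p.edges_subset_edgeSet he)
  have hEq : G.edgeFinset = p.edges.toFinset :=
    (Finset.eq_of_subset_of_card_le hsub (by omega)).symm
  have hmemE : ∀ a b : V, G.Adj a b → s(a,b) ∈ p.edges := by
    intro a b hab
    have : s(a,b) ∈ G.edgeFinset := mem_edgeFinset.2 (G.mem_edgeSet.2 hab)
    rw [hEq, List.mem_toFinset] at this
    exact this
  -- build the isomorphism
  have hfn : ∀ i : Fin n, (i : ℕ) ≤ p.length := by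
    intro i; rw [hlen]; omega
  have hinj : Function.Injective (fun i : Fin n => p.getVert i) := by
    intro i j hij
    exact Fin.ext (getVert_inj p hp i j (hfn i) (hfn j) hij)
  have hbij : Function.Bijective (fun i : Fin n => p.getVert i) :=
    (Fintype.bijective_iff_injective_and_card _).2 ⟨hinj, by simp [hn]⟩
  have iso : pathGraph n ≃g G := {
    toEquiv := Equiv.ofBijective _ hbij
    map_rel_iff' := by
      intro i j
      show G.Adj (p.getVert i) (p.getVert j) ↔ (pathGraph n).Adj i j
      rw [pathGraph_adj]
      constructor
      · intro hadj
        obtain ⟨k, hk, hke⟩ := mem_edges_exists p _ (hmemE _ _ hadj)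
        rw [Sym2.eq_iff] at hke
        rcases hke with ⟨h1, h2⟩ | ⟨h1, h2⟩
        · have hik := getVert_inj p hp i k (hfn i) (by omega) h1
          have hjk := getVert_inj p hp j (k+1) (hfn j) (by omega) h2
          left; omega
        · have hik := getVert_inj p hp i (k+1) (hfn i) (by omega) h1
          have hjk := getVert_inj p hp j k (hfn j) (by omega) h2
          right; omega
      · intro h
        rcases h with h | h
        · have hi : (i : ℕ) < p.length := by rw [hlen]; omega
          have := p.adj_getVert_succ hi
          rwa [show (i : ℕ) + 1 = (j : ℕ) from h] at this
        · have hj : (j : ℕ) < p.length := by rw [hlen]; omega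
          have := p.adj_getVert_succ hj
          rw [show (j : ℕ) + 1 = (i : ℕ) from h] at this
          exact this.symm
  }
  exact ⟨iso.symm⟩
end

section
/- (Spanning cover counts are reconstructible) Let G and H be hypomorphic finite simple graphs on n vertices and let F = (F₁,…,F_k) be a finite sequence of finite simple graphs each having fewer than n vertices. Then the number of k-tuples (B₁,…,B_k) of subgraphs of G with Bᵢ isomorphic to Fᵢ for each i and with the union of the vertex sets of the Bᵢ equal to all of V(G) is the same as the corresponding number of k-tuples of subgraphs of H. -/
open SimpleGraph

/-- The number of `k`-tuples of subgraphs of `G` whose `i`-th component is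
isomorphic to `F i` and whose vertex sets together cover all of `V(G)`. -/
noncomputable def spanningCoverCount {V : Type*} (G : SimpleGraph V) {k : ℕ}
    {U : Fin k → Type*} (F : ∀ i, SimpleGraph (U i)) : ℕ :=
  Nat.card {B : Fin k → G.Subgraph //
    (∀ i, Nonempty ((B i).coe ≃g F i)) ∧ (⋃ i, (B i).verts) = Set.univ}

namespace Recon

variable {V W : Type*}

instance instFiniteSubgraph [Finite V] (G : SimpleGraph V) : Finite G.Subgraph := by
  have h : Function.Injective (fun B : G.Subgraph => (B.verts, B.Adj)) := by
    intro B C h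
    rw [Prod.mk.injEq] at h
    exact SimpleGraph.Subgraph.ext h.1 h.2
  exact Finite.of_injective _ h

/-- Transport of subgraphs along an isomorphism. -/
def subgraphMapEquiv {G : SimpleGraph V} {H : SimpleGraph W} (φ : G ≃g H) :
    G.Subgraph ≃ H.Subgraph where
  toFun B := B.map φ.toHom
  invFun B := B.map φ.symm.toHom
  left_inv B := by
    show SimpleGraph.Subgraph.map φ.symm.toHom (SimpleGraph.Subgraph.map φ.toHom B) = B
    rw [← SimpleGraph.Subgraph.map_comp]
    convert SimpleGraph.Subgraph.map_id B
    ext x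
    exact φ.symm_apply_apply x
  right_inv B := by
    show SimpleGraph.Subgraph.map φ.toHom (SimpleGraph.Subgraph.map φ.symm.toHom B) = B
    rw [← SimpleGraph.Subgraph.map_comp]
    convert SimpleGraph.Subgraph.map_id B
    ext x
    exact φ.apply_symm_apply x

/-- The coercion of a transported subgraph is isomorphic to the original. -/
def mapCoeIso {G : SimpleGraph V} {H : SimpleGraph W} (φ : G ≃g H) (B : G.Subgraph) :
    B.coe ≃g (subgraphMapEquiv φ B).coe where
  toFun x := ⟨φ x, ⟨(x : V), x.2, rfl⟩⟩
  invFun y := ⟨φ.symm y, by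
    obtain ⟨x, hx, he⟩ := y.2
    have : φ.symm (y : W) = x := by rw [← he]; exact φ.symm_apply_apply x
    rw [this]; exact hx⟩
  left_inv x := by
    apply Subtype.ext
    exact φ.symm_apply_apply _
  right_inv y := by
    apply Subtype.ext
    exact φ.apply_symm_apply _
  map_rel_iff' := by
    intro x y
    constructor
    · rintro ⟨u, v, h, hu, hv⟩
      have hu' : u = (x : V) := φ.injective hu
      have hv' : v = (y : V) := φ.injective hv
      subst hu'; subst hv'
      exact h
    · intro h
      exact ⟨(x : V), (y : V), h, rfl, rfl⟩

lemma subgraphMapEquiv_verts {G : SimpleGraph V} {H : SimpleGraph W} (φ : G ≃g H)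
    (B : G.Subgraph) : (subgraphMapEquiv φ B).verts = φ '' B.verts := rfl

def restrictSubgraph (G : SimpleGraph V) (s : Set V) (B : G.Subgraph) :
    (G.induce s).Subgraph where
  verts := Subtype.val ⁻¹' B.verts
  Adj u v := B.Adj ↑u ↑v
  adj_sub h := B.adj_sub h
  edge_vert h := B.edge_vert h
  symm := ⟨fun _ _ h => B.adj_symm h⟩

def restrictEquiv (G : SimpleGraph V) (s : Set V) :
    {B : G.Subgraph // B.verts ⊆ s} ≃ (G.induce s).Subgraph where
  toFun B := restrictSubgraph G s B.1
  invFun C := ⟨C.map (SimpleGraph.Embedding.induce s).toHom, by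
    rintro x ⟨u, hu, rfl⟩
    exact u.2⟩
  left_inv := by
    rintro ⟨B, hB⟩
    apply Subtype.ext
    ext a b
    · constructor
      · rintro ⟨u, hu, rfl⟩; exact hu
      · intro ha; exact ⟨⟨a, hB ha⟩, ha, rfl⟩
    · constructor
      · rintro ⟨u, v, h, rfl, rfl⟩; exact h
      · intro h
        exact ⟨⟨a, hB (B.edge_vert h)⟩, ⟨b, hB (B.edge_vert h.symm)⟩, h, rfl, rfl⟩
  right_inv C := by
    ext a b
    · constructor
      · rintro ⟨u, hu, hu'⟩
        have : u = a := Subtype.ext hu'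
        rwa [← this]
      · intro ha; exact ⟨a, ha, rfl⟩
    · constructor
      · rintro ⟨u, v, h, hu, hv⟩
        have hu' : u = a := Subtype.ext hu
        have hv' : v = b := Subtype.ext hv
        rwa [hu', hv'] at h
      · intro h; exact ⟨a, b, h, rfl, rfl⟩

def restrictCoeIso (G : SimpleGraph V) (s : Set V) (B : G.Subgraph) (hB : B.verts ⊆ s) :
    (restrictSubgraph G s B).coe ≃g B.coe where
  toFun x := ⟨(x : s), x.2⟩
  invFun y := ⟨⟨(y : V), hB y.2⟩, y.2⟩
  left_inv _ := rfl
  right_inv _ := rfl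
  map_rel_iff' := Iff.rfl

def coeIsoOfEq {G : SimpleGraph V} {A B : G.Subgraph} (h : A = B) : A.coe ≃g B.coe :=
  by subst h; exact RelIso.refl _


variable {k : ℕ} {U : Fin k → Type*}


/-- number of tuples of subgraphs isomorphic to the `F i` with vertex sets inside `s`. -/
noncomputable def nsub (F : ∀ i, SimpleGraph (U i)) (G : SimpleGraph V) (s : Set V) : ℕ :=
  Nat.card {B : Fin k → G.Subgraph //
    (∀ i, Nonempty ((B i).coe ≃g F i)) ∧ (⋃ i, (B i).verts) ⊆ s}

lemma nsub_restrict (F : ∀ i, SimpleGraph (U i)) (G : SimpleGraph V) {s : Set V}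
    {t : Set V} (hts : t ⊆ s) :
    nsub F G t = nsub F (G.induce s) (Subtype.val ⁻¹' t) := by
  apply Nat.card_congr
  have hsub : ∀ (B : Fin k → G.Subgraph), ((⋃ i, (B i).verts) ⊆ t) → ∀ i, (B i).verts ⊆ s :=
    fun B h i => (Set.subset_iUnion (fun i => (B i).verts) i).trans (h.trans hts)
  refine
    { toFun := fun B => ⟨fun i => restrictSubgraph G s (B.1 i), ?_, ?_⟩
      invFun := fun C => ⟨fun i => ((restrictEquiv G s).symm (C.1 i)).1, ?_, ?_⟩
      left_inv := ?_
      right_inv := ?_ }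
  · intro i
    obtain ⟨e⟩ := B.2.1 i
    exact ⟨(restrictCoeIso G s (B.1 i) (hsub B.1 B.2.2 i)).trans e⟩
  · refine Set.iUnion_subset fun i => ?_
    exact Set.preimage_mono ((Set.subset_iUnion (fun i => (B.1 i).verts) i).trans B.2.2)
  · intro i
    obtain ⟨e⟩ := C.2.1 i
    have h1 : restrictSubgraph G s ((restrictEquiv G s).symm (C.1 i)).1 = C.1 i :=
      (restrictEquiv G s).apply_symm_apply (C.1 i)
    have h2 := restrictCoeIso G s ((restrictEquiv G s).symm (C.1 i)).1
      ((restrictEquiv G s).symm (C.1 i)).2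
    exact ⟨h2.symm.trans ((coeIsoOfEq h1).trans e)⟩
  · refine Set.iUnion_subset fun i => ?_
    have h1 : ((restrictEquiv G s).symm (C.1 i)).1.verts = Subtype.val '' (C.1 i).verts := rfl
    rw [h1]
    have h2 : (C.1 i).verts ⊆ Subtype.val ⁻¹' t :=
      (Set.subset_iUnion (fun i => (C.1 i).verts) i).trans C.2.2
    exact (Set.image_mono h2).trans (Set.image_preimage_subset _ _)
  · rintro ⟨B, hB⟩
    apply Subtype.ext
    funext i
    have := congrArg Subtype.val
      ((restrictEquiv G s).symm_apply_apply ⟨B i, hsub B hB.2 i⟩)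
    exact this
  · rintro ⟨C, hC⟩
    apply Subtype.ext
    funext i
    exact (restrictEquiv G s).apply_symm_apply (C i)

lemma nsub_iso (F : ∀ i, SimpleGraph (U i)) {G : SimpleGraph V} {H : SimpleGraph W}
    (φ : G ≃g H) (s : Set V) : nsub F G s = nsub F H (φ '' s) := by
  apply Nat.card_congr
  refine Equiv.subtypeEquiv (Equiv.piCongrRight fun _ => subgraphMapEquiv φ) fun B => ?_
  have h2 : (⋃ i, (subgraphMapEquiv φ (B i)).verts) = φ '' ⋃ i, (B i).verts := by
    simp only [subgraphMapEquiv_verts, Set.image_iUnion]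
  constructor
  · rintro ⟨h1, hu⟩
    refine ⟨fun i => ?_, ?_⟩
    · obtain ⟨e⟩ := h1 i
      exact ⟨(mapCoeIso φ (B i)).symm.trans e⟩
    · simp only [Equiv.piCongrRight_apply, Pi.map_apply]
      rw [h2]
      exact Set.image_mono hu
  · rintro ⟨h1, hu⟩
    simp only [Equiv.piCongrRight_apply, Pi.map_apply] at h1 hu
    refine ⟨fun i => ?_, ?_⟩
    · obtain ⟨e⟩ := h1 i
      exact ⟨(mapCoeIso φ (B i)).trans e⟩
    · rw [h2] at hu
      exact (Set.image_subset_image_iff φ.injective).mp hu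

/-- the number of subgraphs of `G` isomorphic to `F'`. -/
noncomputable def scount {U' : Type*} (F' : SimpleGraph U') (G : SimpleGraph V) : ℕ :=
  Nat.card {B : G.Subgraph // Nonempty (B.coe ≃g F')}

lemma scount_iso {U' : Type*} (F' : SimpleGraph U') {G : SimpleGraph V} {H : SimpleGraph W}
    (φ : G ≃g H) : scount F' G = scount F' H := by
  apply Nat.card_congr
  refine Equiv.subtypeEquiv (subgraphMapEquiv φ) fun B => ?_
  exact ⟨fun ⟨e⟩ => ⟨(mapCoeIso φ B).symm.trans e⟩, fun ⟨e⟩ => ⟨(mapCoeIso φ B).trans e⟩⟩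

lemma scount_induce {U' : Type*} (F' : SimpleGraph U') (G : SimpleGraph V) (s : Set V) :
    scount F' (G.induce s) =
      Nat.card {B : G.Subgraph // Nonempty (B.coe ≃g F') ∧ B.verts ⊆ s} := by
  apply Nat.card_congr
  refine
    { toFun := fun C => ⟨((restrictEquiv G s).symm C.1).1, ?_, ((restrictEquiv G s).symm C.1).2⟩
      invFun := fun B => ⟨restrictSubgraph G s B.1, ?_⟩
      left_inv := ?_
      right_inv := ?_ }
  · obtain ⟨e⟩ := C.2
    have h1 : restrictSubgraph G s ((restrictEquiv G s).symm C.1).1 = C.1 :=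
      (restrictEquiv G s).apply_symm_apply C.1
    have h2 := restrictCoeIso G s ((restrictEquiv G s).symm C.1).1 ((restrictEquiv G s).symm C.1).2
    exact ⟨h2.symm.trans ((coeIsoOfEq h1).trans e)⟩
  · obtain ⟨e⟩ := B.2.1
    exact ⟨(restrictCoeIso G s B.1 B.2.2).trans e⟩
  · rintro ⟨C, hC⟩
    apply Subtype.ext
    exact (restrictEquiv G s).apply_symm_apply C
  · rintro ⟨B, hB⟩
    apply Subtype.ext
    show ((restrictEquiv G s).symm (restrictEquiv G s ⟨B, hB.2⟩)).1 = B
    rw [(restrictEquiv G s).symm_apply_apply]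

/-- double counting: pairs counted fiber-wise both ways. -/
lemma sum_card_fiber {α : Type*} [Finite α] [Fintype V] (p : α → V → Prop) :
    ∑ v : V, Nat.card {a : α // p a v} = Nat.card {x : α × V // p x.1 x.2} := by
  classical
  have : Fintype α := Fintype.ofFinite α
  rw [Nat.card_congr (Equiv.subtypeProdEquivSigmaSubtype p)]
  rw [Nat.card_eq_fintype_card, Fintype.card_sigma]
  simp only [Nat.card_eq_fintype_card, Fintype.card_subtype, Finset.card_filter]
  rw [Finset.sum_comm]

lemma card_pairs_const {α : Type*} [Finite α] [Fintype V] (p : α → V → Prop) (c : ℕ)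
    (h : ∀ a, Nat.card {v : V // p a v} = c) :
    Nat.card {x : α × V // p x.1 x.2} = c * Nat.card α := by
  classical
  have hα : Fintype α := Fintype.ofFinite α
  rw [Nat.card_congr (Equiv.subtypeProdEquivSigmaSubtype p), Nat.card_eq_fintype_card,
    Fintype.card_sigma, Nat.card_eq_fintype_card]
  have h' : ∀ a : α, Fintype.card {v : V // p a v} = c := fun a => by
    rw [← Nat.card_eq_fintype_card]; exact h a
  simp only [h', Finset.sum_const, Finset.card_univ, smul_eq_mul, mul_comm]

lemma kelly_single {U' : Type*} [Fintype U'] (F' : SimpleGraph U') [Fintype V]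
    (G : SimpleGraph V) :
    ∑ v : V, scount F' (G.induce {u | u ≠ v}) =
      (Fintype.card V - Fintype.card U') * scount F' G := by
  classical
  have hstep : ∀ v : V, scount F' (G.induce {u | u ≠ v}) =
      Nat.card {a : {B : G.Subgraph // Nonempty (B.coe ≃g F')} //
        a.1.verts ⊆ {u | u ≠ v}} := by
    intro v
    rw [scount_induce]
    exact Nat.card_congr (Equiv.subtypeSubtypeEquivSubtypeInter _ _).symm
  calc ∑ v : V, scount F' (G.induce {u | u ≠ v})
      = ∑ v : V, Nat.card {a : {B : G.Subgraph // Nonempty (B.coe ≃g F')} //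
          a.1.verts ⊆ {u | u ≠ v}} := Finset.sum_congr rfl fun v _ => hstep v
    _ = Nat.card {x : {B : G.Subgraph // Nonempty (B.coe ≃g F')} × V //
          x.1.1.verts ⊆ {u | u ≠ x.2}} := sum_card_fiber _
    _ = (Fintype.card V - Fintype.card U') * scount F' G := by
        unfold scount
        refine card_pairs_const
          (fun (a : {B : G.Subgraph // Nonempty (B.coe ≃g F')}) (v : V) =>
            a.1.verts ⊆ {u | u ≠ v}) _ fun a => ?_
        have he : Nat.card a.1.verts = Fintype.card U' := by
          obtain ⟨e⟩ := a.2
          rw [Nat.card_congr e.toEquiv, Nat.card_eq_fintype_card]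
        have hiff : ∀ v : V, a.1.verts ⊆ {u | u ≠ v} ↔ ¬ (v ∈ a.1.verts) := by
          intro v
          constructor
          · intro hs hv
            exact hs hv rfl
          · intro hv x hx
            intro hxv
            exact hv (hxv ▸ hx)
        rw [Nat.card_congr (Equiv.subtypeEquivRight hiff)]
        rw [Nat.card_eq_fintype_card, Fintype.card_subtype_compl, ← he,
          Nat.card_eq_fintype_card]

noncomputable instance instFintypeNe [Fintype V] (v : V) : Fintype ↥{u : V | u ≠ v} :=
  Fintype.ofFinite _

noncomputable def nm (F : ∀ i, SimpleGraph (U i)) (m : ℕ) [Fintype V] (G : SimpleGraph V) : ℕ :=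
  ∑ T ∈ Finset.powersetCard m (Finset.univ : Finset V), nsub F G ↑T

lemma nm_iso (F : ∀ i, SimpleGraph (U i)) (m : ℕ) [Fintype V] [Fintype W]
    {G : SimpleGraph V} {H : SimpleGraph W} (φ : G ≃g H) : nm F m G = nm F m H := by
  classical
  unfold nm
  refine Finset.sum_nbij' (fun T => T.image φ) (fun T => T.image φ.symm) ?_ ?_ ?_ ?_ ?_
  · intro T hT
    rw [Finset.mem_powersetCard_univ] at hT ⊢
    rw [Finset.card_image_of_injective _ φ.injective, hT]
  · intro T hT
    rw [Finset.mem_powersetCard_univ] at hT ⊢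
    rw [Finset.card_image_of_injective _ φ.symm.injective, hT]
  · intro T _
    ext x
    simp [Finset.image_image]
  · intro T _
    ext x
    simp [Finset.image_image]
  · intro T _
    rw [nsub_iso F φ]
    congr 1
    exact (Finset.coe_image).symm

lemma nm_kelly (F : ∀ i, SimpleGraph (U i)) [Fintype V] (G : SimpleGraph V) (m : ℕ)
    (hm : m ≤ Fintype.card V) :
    ∑ v : V, nm F m (G.induce {u | u ≠ v}) = (Fintype.card V - m) * nm F m G := by
  classical
  have hinner : ∀ v : V, nm F m (G.induce {u | u ≠ v}) =
      ∑ T ∈ (Finset.powersetCard m (Finset.univ : Finset V)).filter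
        (fun T : Finset V => v ∉ T), nsub F G ↑T := by
    intro v
    unfold nm
    refine Finset.sum_nbij' (fun T' => T'.map (Function.Embedding.subtype _))
      (fun T => T.subtype _) ?_ ?_ ?_ ?_ ?_
    · intro T' hT'
      rw [Finset.mem_powersetCard_univ] at hT'
      rw [Finset.mem_filter, Finset.mem_powersetCard_univ, Finset.card_map]
      refine ⟨hT', ?_⟩
      intro hv
      rw [Finset.mem_map] at hv
      obtain ⟨y, _, hy⟩ := hv
      exact y.2 hy
    · intro T hT
      rw [Finset.mem_filter, Finset.mem_powersetCard_univ] at hT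
      rw [Finset.mem_powersetCard_univ]
      rw [Finset.card_subtype, Finset.filter_true_of_mem, hT.1]
      intro x hx
      show x ≠ v
      intro h
      exact hT.2 (h ▸ hx)
    · intro T' _
      ext a
      constructor
      · intro ha
        rw [Finset.mem_subtype, Finset.mem_map] at ha
        obtain ⟨b, hb, hba⟩ := ha
        have hb' : b = a := Subtype.ext hba
        rwa [← hb']
      · intro ha
        rw [Finset.mem_subtype, Finset.mem_map]
        exact ⟨a, ha, rfl⟩
    · intro T hT
      rw [Finset.mem_filter] at hT
      show (T.subtype _).map (Function.Embedding.subtype _) = T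
      rw [Finset.subtype_map]
      apply Finset.filter_true_of_mem
      intro x hx
      show x ≠ v
      intro h
      exact hT.2 (h ▸ hx)
    · intro T' _
      have hsub : (↑(T'.map (Function.Embedding.subtype _)) : Set V) ⊆ {u | u ≠ v} := by
        intro x hx
        rw [Finset.coe_map] at hx
        obtain ⟨y, _, hy⟩ := hx
        exact hy ▸ y.2
      rw [nsub_restrict F G hsub]
      congr 1
      ext a
      simp [Finset.mem_coe, Finset.mem_map, Subtype.ext_iff]
  calc ∑ v : V, nm F m (G.induce {u | u ≠ v})
      = ∑ v : V, ∑ T ∈ (Finset.powersetCard m (Finset.univ : Finset V)).filter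
          (fun T : Finset V => v ∉ T), nsub F G ↑T := Finset.sum_congr rfl fun v _ => hinner v
    _ = ∑ v : V, ∑ T ∈ Finset.powersetCard m (Finset.univ : Finset V),
          if v ∉ T then nsub F G ↑T else 0 := by
        refine Finset.sum_congr rfl fun v _ => ?_
        rw [Finset.sum_filter]
    _ = ∑ T ∈ Finset.powersetCard m (Finset.univ : Finset V),
          ∑ v : V, if v ∉ T then nsub F G ↑T else 0 := Finset.sum_comm
    _ = (Fintype.card V - m) * nm F m G := by
        unfold nm
        rw [Finset.mul_sum]
        refine Finset.sum_congr rfl fun T hT => ?_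
        rw [← Finset.sum_filter, Finset.sum_const, smul_eq_mul]
        congr 1
        rw [← Finset.sdiff_eq_filter, Finset.card_sdiff_of_subset (Finset.subset_univ T),
          Finset.card_univ, (Finset.mem_powersetCard_univ.mp hT)]

lemma nsub_univ_eq (F : ∀ i, SimpleGraph (U i)) (G : SimpleGraph V) :
    nsub F G Set.univ = ∏ i, scount (F i) G := by
  unfold nsub scount
  rw [← Nat.card_pi]
  apply Nat.card_congr
  refine (Equiv.subtypeEquivRight ?_).trans Equiv.subtypePiEquivPi
  intro B
  simp only [Set.subset_univ, and_true]

lemma ie_inner [Fintype V] (S : Set V) [Decidable (S = Set.univ)]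
    [∀ T : Finset V, Decidable (S ⊆ ↑T)] :
    ∑ T ∈ (Finset.univ : Finset V).powerset,
      (-1 : ℤ) ^ (Fintype.card V - T.card) * (if S ⊆ ↑T then 1 else 0) =
    if S = Set.univ then 1 else 0 := by
  classical
  have h1 : ∑ T ∈ (Finset.univ : Finset V).powerset,
      (-1 : ℤ) ^ (Fintype.card V - T.card) * (if S ⊆ ↑T then 1 else 0) =
      ∑ T ∈ (Finset.univ : Finset V).powerset,
      (-1 : ℤ) ^ T.card * (if T ⊆ S.toFinsetᶜ then 1 else 0) := by
    refine Finset.sum_nbij' (fun T => Tᶜ) (fun T => Tᶜ) ?_ ?_ ?_ ?_ ?_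
    · intro T _; exact Finset.mem_powerset.mpr (Finset.subset_univ _)
    · intro T _; exact Finset.mem_powerset.mpr (Finset.subset_univ _)
    · intro T _; exact compl_compl T
    · intro T _; exact compl_compl T
    · intro T _
      have hiff : S ⊆ ↑T ↔ Tᶜ ⊆ S.toFinsetᶜ := by
        rw [Finset.compl_subset_compl]
        exact Set.toFinset_subset.symm
      show (-1 : ℤ) ^ (Fintype.card V - T.card) * (if S ⊆ ↑T then 1 else 0) =
        (-1 : ℤ) ^ (Tᶜ.card) * (if Tᶜ ⊆ S.toFinsetᶜ then 1 else 0)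
      rw [Finset.card_compl]
      congr 1
      exact if_congr hiff rfl rfl
  rw [h1]
  have h2 : ∑ T ∈ (Finset.univ : Finset V).powerset,
      (-1 : ℤ) ^ T.card * (if T ⊆ S.toFinsetᶜ then 1 else 0) =
      ∑ T ∈ (S.toFinsetᶜ).powerset, (-1 : ℤ) ^ T.card := by
    simp only [mul_ite, mul_one, mul_zero]
    rw [← Finset.sum_filter]
    congr 1
    ext T
    simp only [Finset.mem_filter, Finset.mem_powerset, Finset.subset_univ, true_and]
  rw [h2, Finset.sum_powerset_neg_one_pow_card]
  have h3 : S.toFinsetᶜ = ∅ ↔ S = Set.univ := by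
    rw [Finset.compl_eq_empty_iff, Set.toFinset_eq_univ]
  exact if_congr h3 rfl rfl

lemma ie (F : ∀ i, SimpleGraph (U i)) [Fintype V] (G : SimpleGraph V) :
    (Nat.card {B : Fin k → G.Subgraph //
        (∀ i, Nonempty ((B i).coe ≃g F i)) ∧ (⋃ i, (B i).verts) = Set.univ} : ℤ) =
    ∑ T ∈ (Finset.univ : Finset V).powerset,
      (-1 : ℤ) ^ (Fintype.card V - T.card) * (nsub F G ↑T : ℤ) := by
  classical
  have hft : Fintype {B : Fin k → G.Subgraph // ∀ i, Nonempty ((B i).coe ≃g F i)} :=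
    Fintype.ofFinite _
  set α := {B : Fin k → G.Subgraph // ∀ i, Nonempty ((B i).coe ≃g F i)} with hαdef
  have hL : (Nat.card {B : Fin k → G.Subgraph //
      (∀ i, Nonempty ((B i).coe ≃g F i)) ∧ (⋃ i, (B i).verts) = Set.univ} : ℤ) =
      ∑ a : α, (if (⋃ i, (a.1 i).verts) = Set.univ then (1:ℤ) else 0) := by
    rw [Nat.card_congr (Equiv.subtypeSubtypeEquivSubtypeInter
      (fun B : Fin k → G.Subgraph => ∀ i, Nonempty ((B i).coe ≃g F i))
      (fun B => (⋃ i, (B i).verts) = Set.univ)).symm,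
      Nat.card_eq_fintype_card, Fintype.card_subtype, Finset.card_filter]
    push_cast
    rfl
  have hR : ∀ T : Finset V, (nsub F G ↑T : ℤ) =
      ∑ a : α, (if (⋃ i, (a.1 i).verts) ⊆ ↑T then (1:ℤ) else 0) := by
    intro T
    unfold nsub
    rw [Nat.card_congr (Equiv.subtypeSubtypeEquivSubtypeInter
      (fun B : Fin k → G.Subgraph => ∀ i, Nonempty ((B i).coe ≃g F i))
      (fun B => (⋃ i, (B i).verts) ⊆ ↑T)).symm,
      Nat.card_eq_fintype_card, Fintype.card_subtype, Finset.card_filter]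
    push_cast
    rfl
  rw [hL]
  calc ∑ a : α, (if (⋃ i, (a.1 i).verts) = Set.univ then (1:ℤ) else 0)
      = ∑ a : α, ∑ T ∈ (Finset.univ : Finset V).powerset,
          (-1:ℤ)^(Fintype.card V - T.card) * (if (⋃ i, (a.1 i).verts) ⊆ ↑T then 1 else 0) := by
        refine Finset.sum_congr rfl fun a _ => ?_
        exact (ie_inner _).symm
    _ = ∑ T ∈ (Finset.univ : Finset V).powerset, ∑ a : α,
          (-1:ℤ)^(Fintype.card V - T.card) * (if (⋃ i, (a.1 i).verts) ⊆ ↑T then 1 else 0) :=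
        Finset.sum_comm
    _ = ∑ T ∈ (Finset.univ : Finset V).powerset,
          (-1:ℤ)^(Fintype.card V - T.card) * (nsub F G ↑T : ℤ) := by
        refine Finset.sum_congr rfl fun T _ => ?_
        rw [hR T, Finset.mul_sum]

lemma span_eq (F : ∀ i, SimpleGraph (U i)) [Fintype V] (G : SimpleGraph V) :
    (Nat.card {B : Fin k → G.Subgraph //
        (∀ i, Nonempty ((B i).coe ≃g F i)) ∧ (⋃ i, (B i).verts) = Set.univ} : ℤ) =
    ∑ m ∈ Finset.range (Fintype.card V + 1),
      (-1:ℤ)^(Fintype.card V - m) * (nm F m G : ℤ) := by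
  classical
  rw [ie F G, Finset.powerset_card_biUnion, Finset.sum_biUnion
    (fun i _ j _ h => Finset.pairwise_disjoint_powersetCard _ h),
    Finset.card_univ]
  refine Finset.sum_congr rfl fun m _ => ?_
  unfold nm
  push_cast
  rw [Finset.mul_sum]
  refine Finset.sum_congr rfl fun T hT => ?_
  rw [Finset.mem_powersetCard_univ.mp hT]

end Recon

/-- Spanning cover counts are reconstructible: for hypomorphic graphs on `n`
vertices and graphs `F i` each with fewer than `n` vertices, the numbers of
spanning tuples of subgraphs agree. -/
theorem spanningCoverCount_reconstructible {V W : Type*} [Fintype V] [Fintype W]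
    (G : SimpleGraph V) (H : SimpleGraph W) (hhyp : Hypomorphic G H)
    {k : ℕ} {U : Fin k → Type*} [∀ i, Fintype (U i)] (F : ∀ i, SimpleGraph (U i))
    (hlt : ∀ i, Fintype.card (U i) < Fintype.card V) :
    spanningCoverCount G F = spanningCoverCount H F := by
  classical
  obtain ⟨r, hr⟩ := hhyp
  have hcard : Fintype.card W = Fintype.card V := (Fintype.card_congr r).symm
  have hs : ∀ i, Recon.scount (F i) G = Recon.scount (F i) H := by
    intro i
    have h3 : ∑ v : V, Recon.scount (F i) (G.induce {u | u ≠ v}) =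
        ∑ w : W, Recon.scount (F i) (H.induce {u | u ≠ w}) := by
      rw [← Equiv.sum_comp r (fun w => Recon.scount (F i) (H.induce {u | u ≠ w}))]
      refine Finset.sum_congr rfl fun v _ => ?_
      obtain ⟨e⟩ := hr v
      exact Recon.scount_iso (F i) e
    have h4 := Recon.kelly_single (F i) G
    have h5 := Recon.kelly_single (F i) H
    rw [h3, h5, hcard] at h4
    exact (Nat.eq_of_mul_eq_mul_left (Nat.sub_pos_of_lt (hlt i)) h4).symm
  have hnm : ∀ m, m ≤ Fintype.card V → Recon.nm F m G = Recon.nm F m H := by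
    intro m hm
    rcases eq_or_lt_of_le hm with heq | hlt'
    · have hG : Recon.nm F m G = ∏ i, Recon.scount (F i) G := by
        unfold Recon.nm
        have hps : Finset.powersetCard m (Finset.univ : Finset V) = {Finset.univ} := by
          rw [heq, ← Finset.card_univ]
          exact Finset.powersetCard_self _
        rw [hps, Finset.sum_singleton, Finset.coe_univ, Recon.nsub_univ_eq]
      have hH : Recon.nm F m H = ∏ i, Recon.scount (F i) H := by
        unfold Recon.nm
        have hps : Finset.powersetCard m (Finset.univ : Finset W) = {Finset.univ} := by
          rw [heq, ← hcard, ← Finset.card_univ]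
          exact Finset.powersetCard_self _
        rw [hps, Finset.sum_singleton, Finset.coe_univ, Recon.nsub_univ_eq]
      rw [hG, hH]
      exact Finset.prod_congr rfl fun i _ => hs i
    · have h3 : ∑ v : V, Recon.nm F m (G.induce {u | u ≠ v}) =
          ∑ w : W, Recon.nm F m (H.induce {u | u ≠ w}) := by
        rw [← Equiv.sum_comp r (fun w => Recon.nm F m (H.induce {u | u ≠ w}))]
        refine Finset.sum_congr rfl fun v _ => ?_
        obtain ⟨e⟩ := hr v
        exact Recon.nm_iso F m e
      have h4 := Recon.nm_kelly F G m hm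
      have h5 := Recon.nm_kelly F H m (by rw [hcard]; exact hm)
      rw [h3, h5, hcard] at h4
      exact (Nat.eq_of_mul_eq_mul_left (Nat.sub_pos_of_lt hlt') h4).symm
  have hZ : (spanningCoverCount G F : ℤ) = (spanningCoverCount H F : ℤ) := by
    unfold spanningCoverCount
    rw [Recon.span_eq F G, Recon.span_eq F H, hcard]
    refine Finset.sum_congr rfl fun m hm => ?_
    rw [hnm m (Nat.lt_succ_iff.mp (Finset.mem_range.mp hm))]
  exact Nat.cast_injective hZ
end

section
/- (Disconnected spanning cover counts are reconstructible) Let G and H be hypomorphic finite simple graphs on n vertices and let F = (F₁,…,F_k) be a finite sequence of finite simple graphs each having fewer than n vertices. Then the number of k-tuples (B₁,…,B_k) of subgraphs of G such that Bᵢ is isomorphic to Fᵢ for each i, the union of the vertex sets of the Bᵢ is all of V(G), and the union of the Bᵢ (union of vertex sets and edge sets) is a disconnected graph, equals the corresponding number of k-tuples of subgraphs of H. -/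
open SimpleGraph

/-- The number of `k`-tuples of subgraphs of `G` whose `i`-th component is
isomorphic to `F i`, whose vertex sets together cover all of `V(G)`, and whose
union (of vertex sets and edge sets) is a disconnected graph. -/
noncomputable def disconnectedSpanningCoverCount {V : Type*} (G : SimpleGraph V) {k : ℕ}
    {U : Fin k → Type*} (F : ∀ i, SimpleGraph (U i)) : ℕ :=
  Nat.card {B : Fin k → G.Subgraph //
    (∀ i, Nonempty ((B i).coe ≃g F i)) ∧ (⋃ i, (B i).verts) = Set.univ ∧
      ¬ (⨆ i, B i : G.Subgraph).coe.Connected}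

namespace ReconAux

instance finiteSubgraph {V : Type*} [Finite V] (G : SimpleGraph V) : Finite G.Subgraph :=
  Finite.of_injective (fun s => (s.verts, s.Adj)) (by
    intro a b h
    rw [Prod.mk.injEq] at h
    exact SimpleGraph.Subgraph.ext h.1 h.2)

lemma nat_card_sigma {ι : Type*} [Fintype ι] (f : ι → Type*) [∀ i, Finite (f i)] :
    Nat.card (Σ i, f i) = ∑ i : ι, Nat.card (f i) := by
  haveI : ∀ i, Fintype (f i) := fun i => Fintype.ofFinite _
  simp [Nat.card_eq_fintype_card, Fintype.card_sigma]

/-- The basic predicate: `f` maps edges of `A` to edges of `Γ` and is injective on `S` and `T`. -/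
def Ok {α : Type*} (A : SimpleGraph α) (S T : Set α) {Vt : Type*} (Γ : SimpleGraph Vt)
    (f : α → Vt) : Prop :=
  (∀ a b, A.Adj a b → Γ.Adj (f a) (f b)) ∧ Set.InjOn f S ∧ Set.InjOn f T

/-- Count of such maps with range of prescribed size. -/
noncomputable def cnt {α : Type*} (A : SimpleGraph α) (S T : Set α) {Vt : Type*}
    (Γ : SimpleGraph Vt) (m : ℕ) : ℕ :=
  Nat.card {f : α → Vt // Ok A S T Γ f ∧ (Set.range f).ncard = m}

/-- Count of all such maps. -/
noncomputable def cntAll {α : Type*} (A : SimpleGraph α) (S T : Set α) {Vt : Type*}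
    (Γ : SimpleGraph Vt) : ℕ :=
  Nat.card {f : α → Vt // Ok A S T Γ f}

lemma cnt_congr {α : Type*} (A : SimpleGraph α) (S T : Set α) {Vt Wt : Type*}
    {Γ : SimpleGraph Vt} {Δ : SimpleGraph Wt} (e : Γ ≃g Δ) (m : ℕ) :
    cnt A S T Γ m = cnt A S T Δ m := by
  apply Nat.card_congr
  refine ⟨fun f => ⟨fun a => e (f.1 a), ?_, ?_⟩, fun g => ⟨fun a => e.symm (g.1 a), ?_, ?_⟩,
    fun f => ?_, fun g => ?_⟩
  · obtain ⟨hp, hS, hT⟩ := f.2.1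
    exact ⟨fun a b hab => e.map_adj_iff.mpr (hp a b hab),
      fun x hx y hy h => hS hx hy (e.toEquiv.injective h),
      fun x hx y hy h => hT hx hy (e.toEquiv.injective h)⟩
  · have : Set.range (fun a => e (f.1 a)) = e '' Set.range f.1 := by
      rw [← Set.range_comp]; rfl
    rw [this, Set.ncard_image_of_injective _ e.injective]
    exact f.2.2
  · obtain ⟨hp, hS, hT⟩ := g.2.1
    exact ⟨fun a b hab => e.symm.map_adj_iff.mpr (hp a b hab),
      fun x hx y hy h => hS hx hy (e.toEquiv.symm.injective h),
      fun x hx y hy h => hT hx hy (e.toEquiv.symm.injective h)⟩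
  · have : Set.range (fun a => e.symm (g.1 a)) = e.symm '' Set.range g.1 := by
      rw [← Set.range_comp]; rfl
    rw [this, Set.ncard_image_of_injective _ e.symm.injective]
    exact g.2.2
  · ext a; simp
  · ext a; simp

lemma kelly_step {α : Type*} [Finite α] (A : SimpleGraph α) (S T : Set α) {Vt : Type*}
    [Fintype Vt] (Γ : SimpleGraph Vt) (m : ℕ) :
    (Fintype.card Vt - m) * cnt A S T Γ m = ∑ v : Vt, cnt A S T (Γ.induce {u | u ≠ v}) m := by
  classical
  set sub := {f : α → Vt // Ok A S T Γ f ∧ (Set.range f).ncard = m} with hsub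
  haveI : Fintype sub := Fintype.ofFinite _
  have h1 : Nat.card (Σ f : sub, {v : Vt // v ∉ Set.range f.1}) =
      (Fintype.card Vt - m) * cnt A S T Γ m := by
    rw [nat_card_sigma]
    have hfib : ∀ f : sub, Nat.card {v : Vt // v ∉ Set.range f.1} = Fintype.card Vt - m := by
      intro f
      have h1 : Nat.card {v : Vt // v ∉ Set.range f.1} = ((Set.range f.1)ᶜ).ncard := by
        rw [← Nat.card_coe_set_eq]
        exact Nat.card_congr (Equiv.subtypeEquivRight (by simp))
      have h2 := Set.ncard_add_ncard_compl (Set.range f.1)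
      rw [h1]
      rw [f.2.2] at h2
      rw [Nat.card_eq_fintype_card] at h2
      omega
    rw [Finset.sum_congr rfl fun f _ => hfib f, Finset.sum_const, Finset.card_univ,
      smul_eq_mul, mul_comm]
    congr 1
    rw [cnt, Nat.card_eq_fintype_card]
  have h2 : Nat.card (Σ f : sub, {v : Vt // v ∉ Set.range f.1}) =
      ∑ v : Vt, cnt A S T (Γ.induce {u | u ≠ v}) m := by
    simp only [cnt]
    rw [← nat_card_sigma (fun v : Vt =>
      {f : α → ↥{u : Vt | u ≠ v} // Ok A S T (Γ.induce {u | u ≠ v}) f ∧ (Set.range f).ncard = m})]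
    apply Nat.card_congr
    refine ⟨fun p => ⟨p.2.1, fun a => ⟨p.1.1 a, fun h => p.2.2 (h ▸ ⟨a, rfl⟩)⟩, ?_, ?_⟩,
      fun q => ⟨⟨fun a => (q.2.1 a).1, ?_, ?_⟩, ⟨q.1, fun hmem => ?_⟩⟩, fun p => ?_, fun q => ?_⟩
    · obtain ⟨hp, hS, hT⟩ := p.1.2.1
      refine ⟨fun a b hab => by simpa using hp a b hab,
        fun x hx y hy h => hS hx hy (congrArg Subtype.val h),
        fun x hx y hy h => hT hx hy (congrArg Subtype.val h)⟩
    · have himg : Subtype.val '' (Set.range fun a => (⟨p.1.1 a, fun h => p.2.2 (h ▸ ⟨a, rfl⟩)⟩ :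
          ↥{u : Vt | u ≠ p.2.1})) = Set.range p.1.1 := by
        ext u; constructor
        · rintro ⟨x, ⟨a, rfl⟩, rfl⟩; exact ⟨a, rfl⟩
        · rintro ⟨a, rfl⟩; exact ⟨_, ⟨a, rfl⟩, rfl⟩
      have := Set.ncard_image_of_injective
        (Set.range fun a => (⟨p.1.1 a, fun h => p.2.2 (h ▸ ⟨a, rfl⟩)⟩ : ↥{u : Vt | u ≠ p.2.1}))
        Subtype.val_injective
      rw [himg] at this
      rw [← this] at *
      exact p.1.2.2
    · obtain ⟨hp, hS, hT⟩ := q.2.2.1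
      refine ⟨fun a b hab => by simpa using hp a b hab,
        fun x hx y hy h => hS hx hy (Subtype.ext h),
        fun x hx y hy h => hT hx hy (Subtype.ext h)⟩
    · have himg : Subtype.val '' (Set.range q.2.1) = Set.range fun a => (q.2.1 a).1 := by
        ext u; constructor
        · rintro ⟨x, ⟨a, rfl⟩, rfl⟩; exact ⟨a, rfl⟩
        · rintro ⟨a, rfl⟩; exact ⟨_, ⟨a, rfl⟩, rfl⟩
      rw [← himg, Set.ncard_image_of_injective _ Subtype.val_injective]
      exact q.2.2.2
    · obtain ⟨a, ha⟩ := hmem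
      exact (q.2.1 a).2 ha
    · rfl
    · rfl
  rw [← h1, h2]

lemma kelly {α : Type*} [Finite α] (A : SimpleGraph α) (S T : Set α) {V W : Type*}
    [Fintype V] [Fintype W] {G : SimpleGraph V} {H : SimpleGraph W} (hhyp : Hypomorphic G H)
    (m : ℕ) (hm : m < Fintype.card V) :
    cnt A S T G m = cnt A S T H m := by
  obtain ⟨r, hr⟩ := hhyp
  have hcard : Fintype.card V = Fintype.card W := Fintype.card_congr r
  have h1 := kelly_step A S T G m
  have h2 := kelly_step A S T H m
  have h3 : ∀ v : V, cnt A S T (G.induce {u | u ≠ v}) m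
      = cnt A S T (H.induce {u | u ≠ r v}) m := fun v => cnt_congr A S T (hr v).some m
  have h4 : ∑ v : V, cnt A S T (H.induce {u | u ≠ r v}) m
      = ∑ w : W, cnt A S T (H.induce {u | u ≠ w}) m :=
    Equiv.sum_comp r (fun w => cnt A S T (H.induce {u | u ≠ w}) m)
  have h5 : (Fintype.card V - m) * cnt A S T G m = (Fintype.card V - m) * cnt A S T H m := by
    rw [h1, Finset.sum_congr rfl fun v _ => h3 v, h4, ← h2, hcard]
  exact Nat.eq_of_mul_eq_mul_left (by omega) h5

lemma cntAll_eq_sum {α : Type*} [Finite α] (A : SimpleGraph α) (S T : Set α) {Vt : Type*}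
    [Finite Vt] (Γ : SimpleGraph Vt) :
    cntAll A S T Γ = ∑ m ∈ Finset.range (Nat.card α + 1), cnt A S T Γ m := by
  classical
  have key : ∀ f : α → Vt, (Set.range f).ncard ≤ Nat.card α := by
    intro f
    rw [← Set.image_univ]
    calc (f '' Set.univ).ncard ≤ (Set.univ : Set α).ncard := Set.ncard_image_le (Set.toFinite _)
    _ = Nat.card α := Set.ncard_univ α
  have hequiv : {f : α → Vt // Ok A S T Γ f} ≃
      Σ m : Fin (Nat.card α + 1), {f : α → Vt // Ok A S T Γ f ∧ (Set.range f).ncard = m} := by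
    refine ⟨fun f => ⟨⟨(Set.range f.1).ncard, by have := key f.1; omega⟩, f.1, f.2, rfl⟩,
      fun p => ⟨p.2.1, p.2.2.1⟩, fun f => rfl, fun p => ?_⟩
    obtain ⟨⟨m, hm⟩, ⟨f, hf, hmeq⟩⟩ := p
    dsimp only at hmeq ⊢
    subst hmeq
    rfl
  rw [cntAll, Nat.card_congr hequiv, nat_card_sigma, ← Fin.sum_univ_eq_sum_range]
  rfl

lemma cntAll_kelly {α : Type*} [Finite α] (A : SimpleGraph α) (S T : Set α) {V W : Type*}
    [Fintype V] [Fintype W] {G : SimpleGraph V} {H : SimpleGraph W} (hhyp : Hypomorphic G H)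
    (hα : Nat.card α < Fintype.card V) :
    cntAll A S T G = cntAll A S T H := by
  rw [cntAll_eq_sum, cntAll_eq_sum]
  refine Finset.sum_congr rfl fun m hm => kelly A S T hhyp m ?_
  have := Finset.mem_range.mp hm
  omega

lemma cntAll_split {α : Type*} (X : SimpleGraph α) (S : Set α)
    (hX : ∀ a b, X.Adj a b → ((a ∈ S ∧ b ∈ S) ∨ (a ∉ S ∧ b ∉ S))) {Vt : Type*}
    (Γ : SimpleGraph Vt) :
    cntAll X S Sᶜ Γ =
      cntAll (X.induce S) Set.univ Set.univ Γ * cntAll (X.induce Sᶜ) Set.univ Set.univ Γ := by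
  classical
  rw [cntAll, cntAll, cntAll, ← Nat.card_prod]
  apply Nat.card_congr
  refine ⟨fun f => (⟨fun a => f.1 a.1, ?_, ?_, ?_⟩, ⟨fun a => f.1 a.1, ?_, ?_, ?_⟩),
    fun p => ⟨fun a => if ha : a ∈ S then p.1.1 ⟨a, ha⟩ else p.2.1 ⟨a, ha⟩, ?_, ?_, ?_⟩,
    fun f => ?_, fun p => ?_⟩
  · exact fun a b hab => f.2.1 a.1 b.1 (by simpa using hab)
  · exact fun x _ y _ h => Subtype.ext (f.2.2.1 x.2 y.2 h)
  · exact fun x _ y _ h => Subtype.ext (f.2.2.1 x.2 y.2 h)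
  · exact fun a b hab => f.2.1 a.1 b.1 (by simpa using hab)
  · exact fun x _ y _ h => Subtype.ext (f.2.2.2 x.2 y.2 h)
  · exact fun x _ y _ h => Subtype.ext (f.2.2.2 x.2 y.2 h)
  · intro a b hab
    dsimp only
    rcases hX a b hab with ⟨ha, hb⟩ | ⟨ha, hb⟩
    · rw [dif_pos ha, dif_pos hb]
      exact p.1.2.1 ⟨a, ha⟩ ⟨b, hb⟩ (by simpa using hab)
    · rw [dif_neg ha, dif_neg hb]
      exact p.2.2.1 ⟨a, ha⟩ ⟨b, hb⟩ (by simpa using hab)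
  · intro x hx y hy h
    dsimp only at h
    rw [dif_pos hx, dif_pos hy] at h
    have := p.1.2.2.1 (Set.mem_univ ⟨x, hx⟩) (Set.mem_univ ⟨y, hy⟩) h
    exact congrArg Subtype.val this
  · intro x hx y hy h
    dsimp only at h
    rw [dif_neg hx, dif_neg hy] at h
    have := p.2.2.2.1 (Set.mem_univ ⟨x, hx⟩) (Set.mem_univ ⟨y, hy⟩) h
    exact congrArg Subtype.val this
  · apply Subtype.ext
    funext a
    by_cases ha : a ∈ S
    · simp [dif_pos ha]
    · simp [dif_neg ha]
  · apply Prod.ext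
    · apply Subtype.ext
      funext a
      simp [dif_pos a.2]
    · apply Subtype.ext
      funext a
      have : a.1 ∉ S := a.2
      simp only [dif_neg this]

lemma card_equiv_eq_cnt {n : ℕ} (X : SimpleGraph (Fin n)) (S T : Set (Fin n))
    {Vt : Type*} [Fintype Vt] (Γ : SimpleGraph Vt) (hVt : Fintype.card Vt = n) :
    Nat.card {ψ : Fin n ≃ Vt // ∀ a b, X.Adj a b → Γ.Adj (ψ a) (ψ b)} = cnt X S T Γ n := by
  apply Nat.card_congr
  have hrange : ∀ f : Fin n → Vt, (Set.range f).ncard = n → Function.Bijective f := by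
    intro f hf
    have hsurj : Set.range f = Set.univ := by
      apply Set.eq_of_subset_of_ncard_le (Set.subset_univ _)
      rw [Set.ncard_univ, Nat.card_eq_fintype_card, hVt, hf]
    exact (Fintype.bijective_iff_surjective_and_card f).mpr
      ⟨Set.range_eq_univ.mp hsurj, by rw [hVt, Fintype.card_fin]⟩
  refine ⟨fun ψ => ⟨fun a => ψ.1 a, ⟨ψ.2, ψ.1.injective.injOn, ψ.1.injective.injOn⟩, ?_⟩,
    fun f => ⟨Equiv.ofBijective f.1 (hrange f.1 f.2.2), f.2.1.1⟩,
    fun ψ => Subtype.ext (Equiv.ext fun a => rfl),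
    fun f => Subtype.ext (funext fun a => rfl)⟩
  rw [ψ.1.surjective.range_eq, Set.ncard_univ, Nat.card_eq_fintype_card, hVt]

lemma ell_eq {V W : Type*} [Fintype V] [Fintype W] {G : SimpleGraph V} {H : SimpleGraph W}
    (hhyp : Hypomorphic G H) {n : ℕ} (hV : Fintype.card V = n) (X : SimpleGraph (Fin n))
    (hX : ¬ X.Connected) :
    Nat.card {ψ : Fin n ≃ V // ∀ a b, X.Adj a b → G.Adj (ψ a) (ψ b)} =
    Nat.card {ψ : Fin n ≃ W // ∀ a b, X.Adj a b → H.Adj (ψ a) (ψ b)} := by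
  have hW : Fintype.card W = n := by
    obtain ⟨r, -⟩ := hhyp
    rw [← Fintype.card_congr r, hV]
  rcases Nat.eq_zero_or_pos n with rfl | hn0
  · haveI : IsEmpty V := Fintype.card_eq_zero_iff.mp hV
    haveI : IsEmpty W := Fintype.card_eq_zero_iff.mp hW
    exact Nat.card_congr
      ⟨fun _ => ⟨Equiv.equivOfIsEmpty _ _, fun a _ _ => a.elim0⟩,
       fun _ => ⟨Equiv.equivOfIsEmpty _ _, fun a _ _ => a.elim0⟩,
       fun x => Subtype.ext (Equiv.ext fun a => a.elim0),
       fun x => Subtype.ext (Equiv.ext fun a => a.elim0)⟩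
  have hpre : ¬ X.Preconnected := by
    intro h
    exact hX ((connected_iff X).mpr ⟨h, ⟨⟨0, hn0⟩⟩⟩)
  rw [SimpleGraph.Preconnected] at hpre
  push_neg at hpre
  obtain ⟨a, b, hab⟩ := hpre
  set S : Set (Fin n) := {x | X.Reachable a x} with hS
  have haS : a ∈ S := SimpleGraph.Reachable.refl a
  have hbS : b ∉ S := hab
  have hsep : ∀ c d, X.Adj c d → ((c ∈ S ∧ d ∈ S) ∨ (c ∉ S ∧ d ∉ S)) := by
    intro c d h
    by_cases hc : c ∈ S
    · exact Or.inl ⟨hc, hc.trans h.reachable⟩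
    · exact Or.inr ⟨hc, fun hd => hc (hd.trans h.symm.reachable)⟩
  rw [card_equiv_eq_cnt X S Sᶜ G hV, card_equiv_eq_cnt X S Sᶜ H hW]
  have hSlt : Nat.card ↥S < Fintype.card V := by
    rw [Nat.card_coe_set_eq, hV]
    have : S ⊂ Set.univ := (Set.ssubset_univ_iff).mpr (fun h => hbS (h ▸ Set.mem_univ b))
    have h2 := Set.ncard_lt_ncard this (Set.toFinite _)
    rwa [Set.ncard_univ, Nat.card_eq_fintype_card, Fintype.card_fin] at h2
  have hSclt : Nat.card ↥Sᶜ < Fintype.card V := by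
    rw [Nat.card_coe_set_eq, hV]
    have : Sᶜ ⊂ Set.univ := (Set.ssubset_univ_iff).mpr
      (fun h => (h ▸ Set.mem_univ a : a ∈ Sᶜ) haS)
    have h2 := Set.ncard_lt_ncard this (Set.toFinite _)
    rwa [Set.ncard_univ, Nat.card_eq_fintype_card, Fintype.card_fin] at h2
  have h1 : cntAll X S Sᶜ G = cntAll X S Sᶜ H := by
    rw [cntAll_split X S hsep G, cntAll_split X S hsep H,
      cntAll_kelly (X.induce S) Set.univ Set.univ hhyp hSlt,
      cntAll_kelly (X.induce Sᶜ) Set.univ Set.univ hhyp hSclt]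
  have h2 : ∀ m < n, cnt X S Sᶜ G m = cnt X S Sᶜ H m := fun m hm =>
    kelly X S Sᶜ hhyp m (by omega)
  have hcardFin : Nat.card (Fin n) = n := by simp
  have hsG : cntAll X S Sᶜ G = (∑ m ∈ Finset.range n, cnt X S Sᶜ G m) + cnt X S Sᶜ G n := by
    rw [cntAll_eq_sum, hcardFin, Finset.sum_range_succ]
  have hsH : cntAll X S Sᶜ H = (∑ m ∈ Finset.range n, cnt X S Sᶜ H m) + cnt X S Sᶜ H n := by
    rw [cntAll_eq_sum, hcardFin, Finset.sum_range_succ]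
  have hps : (∑ m ∈ Finset.range n, cnt X S Sᶜ G m) = ∑ m ∈ Finset.range n, cnt X S Sᶜ H m :=
    Finset.sum_congr rfl fun m hm => h2 m (Finset.mem_range.mp hm)
  omega

/-- The pulled-back graph on `Fin n` of the union of the `B i` along `ψ`. -/
def pullGraph {V : Type*} (G : SimpleGraph V) {k n : ℕ} (B : Fin k → G.Subgraph)
    (ψ : Fin n ≃ V) : SimpleGraph (Fin n) where
  Adj a b := (⨆ i, B i).Adj (ψ a) (ψ b)
  symm := ⟨fun a b h => (⨆ i, B i).adj_symm h⟩
  loopless := ⟨fun a h => (h : (⨆ i, B i).Adj (ψ a) (ψ a)).ne rfl⟩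

/-- Pull back a tuple member as a subgraph of `X`. -/
def pullSub {V : Type*} {G : SimpleGraph V} {k n : ℕ} (B : Fin k → G.Subgraph)
    (ψ : Fin n ≃ V) (X : SimpleGraph (Fin n))
    (hadj : ∀ a b, X.Adj a b ↔ (⨆ i, B i).Adj (ψ a) (ψ b)) (i : Fin k) : X.Subgraph where
  verts := ⇑ψ ⁻¹' (B i).verts
  Adj a b := (B i).Adj (ψ a) (ψ b)
  adj_sub h := (hadj _ _).mpr (SimpleGraph.Subgraph.iSup_adj.mpr ⟨i, h⟩)
  edge_vert h := (B i).edge_vert h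
  symm := ⟨fun a b h => (B i).adj_symm h⟩

/-- Push forward a subgraph of `X` to a subgraph of `G` along `ψ`. -/
def pushSub {V : Type*} {G : SimpleGraph V} {k n : ℕ} (X : SimpleGraph (Fin n))
    (B' : Fin k → X.Subgraph) (ψ : Fin n ≃ V)
    (hψ : ∀ a b, X.Adj a b → G.Adj (ψ a) (ψ b)) (i : Fin k) : G.Subgraph where
  verts := ⇑ψ.symm ⁻¹' (B' i).verts
  Adj u v := (B' i).Adj (ψ.symm u) (ψ.symm v)
  adj_sub h := by
    have h2 := hψ _ _ ((B' i).adj_sub h)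
    simpa using h2
  edge_vert h := (B' i).edge_vert h
  symm := ⟨fun u v h => (B' i).adj_symm h⟩

noncomputable def fiber_equiv {V : Type*} {G : SimpleGraph V} {k : ℕ} {U : Fin k → Type*}
    (F : ∀ i, SimpleGraph (U i)) {n : ℕ} (X : SimpleGraph (Fin n)) :
    {p : {B : Fin k → G.Subgraph //
        (∀ i, Nonempty ((B i).coe ≃g F i)) ∧ (⋃ i, (B i).verts) = Set.univ ∧
        ¬ (⨆ i, B i : G.Subgraph).coe.Connected} × (Fin n ≃ V) //
      pullGraph G p.1.1 p.2 = X} ≃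
    ({ψ : Fin n ≃ V // ∀ a b, X.Adj a b → G.Adj (ψ a) (ψ b)} ×
     {B' : Fin k → X.Subgraph //
        (∀ i, Nonempty ((B' i).coe ≃g F i)) ∧ (⨆ i, B' i) = ⊤ ∧ ¬ X.Connected}) := by
  refine ⟨fun p => ?_, fun q => ?_, ?_, ?_⟩
  · obtain ⟨⟨⟨B, hB1, hB2, hB3⟩, ψ⟩, hXeq⟩ := p
    have hadj : ∀ a b, X.Adj a b ↔ (⨆ i, B i).Adj (ψ a) (ψ b) := by
      intro a b; rw [← hXeq]; exact Iff.rfl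
    have hverts : (⨆ i, B i).verts = Set.univ := by
      rw [SimpleGraph.Subgraph.verts_iSup, hB2]
    refine ⟨⟨ψ, fun a b h => (⨆ i, B i).adj_sub ((hadj a b).mp h)⟩,
      ⟨pullSub B ψ X hadj, fun i => ?_, ?_, ?_⟩⟩
    · have e0 : (pullSub B ψ X hadj i).coe ≃g (B i).coe :=
        ⟨ψ.subtypeEquiv fun a => Iff.rfl, Iff.rfl⟩
      exact ⟨e0.trans (hB1 i).some⟩
    · apply SimpleGraph.Subgraph.ext
      · rw [SimpleGraph.Subgraph.verts_iSup, SimpleGraph.Subgraph.verts_top]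
        show (⋃ i, ⇑ψ ⁻¹' (B i).verts) = Set.univ
        rw [← Set.preimage_iUnion, hB2, Set.preimage_univ]
      · funext a b
        apply propext
        rw [SimpleGraph.Subgraph.iSup_adj, SimpleGraph.Subgraph.top_adj, hadj,
          SimpleGraph.Subgraph.iSup_adj]
        exact Iff.rfl
    · intro hc
      apply hB3
      have e : (⨆ i, B i).coe ≃g X := by
        refine ⟨⟨fun x => ψ.symm x.1, fun a => ⟨ψ a, by rw [hverts]; trivial⟩,
          fun x => Subtype.ext (by simp), fun a => by simp⟩, ?_⟩
        intro x y
        show X.Adj (ψ.symm ↑x) (ψ.symm ↑y) ↔ (⨆ i, B i).coe.Adj x y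
        rw [hadj]
        simp [SimpleGraph.Subgraph.coe_adj]
      exact e.connected_iff.mpr hc
  · obtain ⟨⟨ψ, hψ⟩, ⟨B', hC1, hC2, hC3⟩⟩ := q
    have hvertsB' : (⋃ i, (B' i).verts) = Set.univ := by
      rw [← SimpleGraph.Subgraph.verts_iSup, hC2, SimpleGraph.Subgraph.verts_top]
    have hadj2 : ∀ u v, (⨆ i, pushSub X B' ψ hψ i).Adj u v ↔ X.Adj (ψ.symm u) (ψ.symm v) := by
      intro u v
      rw [SimpleGraph.Subgraph.iSup_adj]
      have : (∃ i, (B' i).Adj (ψ.symm u) (ψ.symm v)) ↔ (⨆ i, B' i).Adj (ψ.symm u) (ψ.symm v) :=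
        SimpleGraph.Subgraph.iSup_adj.symm
      rw [show (∃ i, (pushSub X B' ψ hψ i).Adj u v) ↔
          (∃ i, (B' i).Adj (ψ.symm u) (ψ.symm v)) from Iff.rfl, this, hC2,
        SimpleGraph.Subgraph.top_adj]
    have hverts2 : (⨆ i, pushSub X B' ψ hψ i).verts = Set.univ := by
      rw [SimpleGraph.Subgraph.verts_iSup]
      show (⋃ i, ⇑ψ.symm ⁻¹' (B' i).verts) = Set.univ
      rw [← Set.preimage_iUnion, hvertsB', Set.preimage_univ]
    refine ⟨⟨⟨pushSub X B' ψ hψ, fun i => ?_, ?_, ?_⟩, ψ⟩, ?_⟩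
    · have e0 : (pushSub X B' ψ hψ i).coe ≃g (B' i).coe :=
        ⟨ψ.symm.subtypeEquiv fun u => Iff.rfl, Iff.rfl⟩
      exact ⟨e0.trans (hC1 i).some⟩
    · show (⋃ i, ⇑ψ.symm ⁻¹' (B' i).verts) = Set.univ
      rw [← Set.preimage_iUnion, hvertsB', Set.preimage_univ]
    · intro hc
      apply hC3
      have e : (⨆ i, pushSub X B' ψ hψ i).coe ≃g X := by
        refine ⟨⟨fun x => ψ.symm x.1, fun a => ⟨ψ a, by rw [hverts2]; trivial⟩,
          fun x => Subtype.ext (by simp), fun a => by simp⟩, ?_⟩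
        intro x y
        show X.Adj (ψ.symm ↑x) (ψ.symm ↑y) ↔ (⨆ i, pushSub X B' ψ hψ i).coe.Adj x y
        rw [← hadj2]
        simp [SimpleGraph.Subgraph.coe_adj]
      exact e.connected_iff.mp hc
    · apply SimpleGraph.ext
      funext a b
      apply propext
      show (⨆ i, pushSub X B' ψ hψ i).Adj (ψ a) (ψ b) ↔ X.Adj a b
      rw [hadj2]
      simp
  · rintro ⟨⟨⟨B, hB1, hB2, hB3⟩, ψ⟩, hXeq⟩
    apply Subtype.ext
    apply Prod.ext
    · apply Subtype.ext
      funext i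
      apply SimpleGraph.Subgraph.ext
      · show ⇑ψ.symm ⁻¹' (⇑ψ ⁻¹' (B i).verts) = (B i).verts
        ext u; simp
      · funext u v
        apply propext
        show (B i).Adj (ψ (ψ.symm u)) (ψ (ψ.symm v)) ↔ (B i).Adj u v
        simp
    · rfl
  · rintro ⟨⟨ψ, hψ⟩, ⟨B', hC1, hC2, hC3⟩⟩
    apply Prod.ext
    · exact Subtype.ext rfl
    · apply Subtype.ext
      funext i
      apply SimpleGraph.Subgraph.ext
      · show ⇑ψ ⁻¹' (⇑ψ.symm ⁻¹' (B' i).verts) = (B' i).verts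
        ext u; simp
      · funext a b
        apply propext
        show (B' i).Adj (ψ.symm (ψ a)) (ψ.symm (ψ b)) ↔ (B' i).Adj a b
        simp

lemma master_count {V : Type*} [Fintype V] (G : SimpleGraph V) {k : ℕ} {U : Fin k → Type*}
    (F : ∀ i, SimpleGraph (U i)) {n : ℕ} (hV : Fintype.card V = n) :
    disconnectedSpanningCoverCount G F * n.factorial =
      ∑ X : SimpleGraph (Fin n),
        (Nat.card {ψ : Fin n ≃ V // ∀ a b, X.Adj a b → G.Adj (ψ a) (ψ b)} *
         Nat.card {B' : Fin k → X.Subgraph //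
            (∀ i, Nonempty ((B' i).coe ≃g F i)) ∧ (⨆ i, B' i) = ⊤ ∧ ¬ X.Connected}) := by
  classical
  have e : Fin n ≃ V := (Fintype.equivFinOfCardEq hV).symm
  have h1 : disconnectedSpanningCoverCount G F * n.factorial =
      Nat.card ({B : Fin k → G.Subgraph //
        (∀ i, Nonempty ((B i).coe ≃g F i)) ∧ (⋃ i, (B i).verts) = Set.univ ∧
        ¬ (⨆ i, B i : G.Subgraph).coe.Connected} × (Fin n ≃ V)) := by
    rw [Nat.card_prod]
    congr 1
    rw [Nat.card_eq_fintype_card, Fintype.card_equiv e, Fintype.card_fin]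
  rw [h1]
  have h2 := Equiv.sigmaFiberEquiv
    (fun p : {B : Fin k → G.Subgraph //
        (∀ i, Nonempty ((B i).coe ≃g F i)) ∧ (⋃ i, (B i).verts) = Set.univ ∧
        ¬ (⨆ i, B i : G.Subgraph).coe.Connected} × (Fin n ≃ V) => pullGraph G p.1.1 p.2)
  rw [← Nat.card_congr h2, nat_card_sigma]
  refine Finset.sum_congr rfl fun X _ => ?_
  rw [Nat.card_congr (fiber_equiv F X), Nat.card_prod]

end ReconAux

/-- Disconnected spanning cover counts are reconstructible. -/
theorem disconnectedSpanningCoverCount_reconstructible {V W : Type*} [Fintype V] [Fintype W]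
    (G : SimpleGraph V) (H : SimpleGraph W) (hhyp : Hypomorphic G H)
    {k : ℕ} {U : Fin k → Type*} [∀ i, Fintype (U i)] (F : ∀ i, SimpleGraph (U i))
    (hlt : ∀ i, Fintype.card (U i) < Fintype.card V) :
    disconnectedSpanningCoverCount G F = disconnectedSpanningCoverCount H F := by
  classical
  obtain ⟨r, -⟩ := id hhyp
  have hW : Fintype.card W = Fintype.card V := (Fintype.card_congr r).symm
  have hG := ReconAux.master_count G F (rfl : Fintype.card V = Fintype.card V)
  have hH := ReconAux.master_count H F hW
  have key : (∑ X : SimpleGraph (Fin (Fintype.card V)),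
      (Nat.card {ψ : Fin (Fintype.card V) ≃ V // ∀ a b, X.Adj a b → G.Adj (ψ a) (ψ b)} *
       Nat.card {B' : Fin k → X.Subgraph //
          (∀ i, Nonempty ((B' i).coe ≃g F i)) ∧ (⨆ i, B' i) = ⊤ ∧ ¬ X.Connected})) =
      ∑ X : SimpleGraph (Fin (Fintype.card V)),
      (Nat.card {ψ : Fin (Fintype.card V) ≃ W // ∀ a b, X.Adj a b → H.Adj (ψ a) (ψ b)} *
       Nat.card {B' : Fin k → X.Subgraph //
          (∀ i, Nonempty ((B' i).coe ≃g F i)) ∧ (⨆ i, B' i) = ⊤ ∧ ¬ X.Connected}) := by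
    refine Finset.sum_congr rfl fun X _ => ?_
    by_cases hX : X.Connected
    · haveI : IsEmpty {B' : Fin k → X.Subgraph //
          (∀ i, Nonempty ((B' i).coe ≃g F i)) ∧ (⨆ i, B' i) = ⊤ ∧ ¬ X.Connected} :=
        ⟨fun b => b.2.2.2 hX⟩
      have hz : Nat.card {B' : Fin k → X.Subgraph //
          (∀ i, Nonempty ((B' i).coe ≃g F i)) ∧ (⨆ i, B' i) = ⊤ ∧ ¬ X.Connected} = 0 :=
        Nat.card_of_isEmpty
      rw [hz, mul_zero, mul_zero]
    · rw [ReconAux.ell_eq hhyp rfl X hX]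
  have := hG.trans (key.trans hH.symm)
  exact Nat.eq_of_mul_eq_mul_right (Nat.factorial_pos _) this
end

section
/- (Counts of disconnected spanning subgraphs are reconstructible) Let G and H be hypomorphic finite simple graphs on n ≥ 2 vertices, and let D be any disconnected finite simple graph on n vertices. Then the subgraph count ⟨G,D⟩ equals ⟨H,D⟩. -/
open SimpleGraph

namespace Recon

variable {V W : Type*} {G : SimpleGraph V} {G' : SimpleGraph W}

instance finiteSubgraph [Finite V] (G : SimpleGraph V) : Finite G.Subgraph := by
  have : Function.Injective
      (fun A : G.Subgraph => (A.verts, {p : V × V | A.Adj p.1 p.2})) := by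
    intro A B h
    simp only [Prod.mk.injEq] at h
    ext x y
    · exact h.1 ▸ Iff.rfl
    · exact iff_of_eq (congrArg (fun s : Set (V × V) => (x, y) ∈ s) h.2)
  exact Finite.of_injective _ this

/-- the coe of a mapped subgraph along an injective hom is isomorphic to the coe -/
noncomputable def coeMapIso (f : G →g G') (hf : Function.Injective f) (A : G.Subgraph) :
    A.coe ≃g (A.map f).coe where
  toEquiv := Equiv.Set.image (⇑f) A.verts hf
  map_rel_iff' := by
    rintro ⟨a, ha⟩ ⟨b, hb⟩
    constructor
    · rintro ⟨u, v, h, hu, hv⟩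
      obtain rfl := hf hu
      obtain rfl := hf hv
      exact h
    · intro h
      exact ⟨a, b, h, rfl, rfl⟩

lemma nonempty_coe_iso_map {α : Type*} (C : SimpleGraph α) (f : G →g G')
    (hf : Function.Injective f) (A : G.Subgraph) :
    Nonempty ((A.map f).coe ≃g C) ↔ Nonempty (A.coe ≃g C) :=
  ⟨fun ⟨i⟩ => ⟨(coeMapIso f hf A).trans i⟩, fun ⟨i⟩ => ⟨(coeMapIso f hf A).symm.trans i⟩⟩

lemma map_union_ncard (f : G →g G') (hf : Function.Injective f) (A B : G.Subgraph) :
    ((A.map f).verts ∪ (B.map f).verts).ncard = (A.verts ∪ B.verts).ncard := by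
  rw [Subgraph.map_verts, Subgraph.map_verts, ← Set.image_union,
    Set.ncard_image_of_injective _ hf]

/-- subgraphs transported along an isomorphism -/
def subgraphIsoEquiv (e : G ≃g G') : G.Subgraph ≃ G'.Subgraph where
  toFun A := A.map e.toHom
  invFun A := A.map e.symm.toHom
  left_inv A := by
    show (A.map e.toHom).map e.symm.toHom = A
    rw [← Subgraph.map_comp]
    have h : (e.symm.toHom.comp e.toHom) = Hom.id := by
      ext x; simp
    rw [h, Subgraph.map_id]
  right_inv A := by
    show (A.map e.symm.toHom).map e.toHom = A
    rw [← Subgraph.map_comp]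
    have h : (e.toHom.comp e.symm.toHom) = Hom.id := by
      ext x; simp
    rw [h, Subgraph.map_id]

/-- subgraphs of an induced graph correspond to subgraphs inside the set -/
def induceSubgraphEquiv (G : SimpleGraph V) (S : Set V) :
    (G.induce S).Subgraph ≃ {A : G.Subgraph // A.verts ⊆ S} where
  toFun B := ⟨B.map (Embedding.induce S).toHom, by
    rintro x ⟨u, hu, rfl⟩; exact u.2⟩
  invFun A := Subgraph.comap (Embedding.induce S).toHom A.1
  left_inv B := by
    ext x y
    · constructor
      · intro hx
        obtain ⟨u, hu, hux⟩ := hx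
        obtain rfl : u = x := Subtype.val_injective hux
        exact hu
      · intro hx
        exact ⟨x, hx, rfl⟩
    · constructor
      · rintro ⟨-, u, v, h, hu, hv⟩
        obtain rfl : u = x := Subtype.val_injective hu
        obtain rfl : v = y := Subtype.val_injective hv
        exact h
      · intro h
        exact ⟨B.adj_sub h, x, y, h, rfl, rfl⟩
  right_inv A := by
    apply Subtype.ext
    ext x y
    · constructor
      · rintro ⟨u, hu, rfl⟩
        exact hu
      · intro hx
        exact ⟨⟨x, A.2 hx⟩, hx, rfl⟩
    · constructor
      · rintro ⟨u, v, ⟨-, h⟩, rfl, rfl⟩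
        exact h
      · intro h
        have hx := A.1.edge_vert h
        have hy := A.1.edge_vert (A.1.adj_symm h)
        exact ⟨⟨x, A.2 hx⟩, ⟨y, A.2 hy⟩, ⟨A.1.adj_sub h, h⟩, rfl, rfl⟩

lemma subCoe_injective (S : Set V) :
    Function.Injective ⇑(Embedding.induce S : G.induce S ↪g G).toHom :=
  Subtype.val_injective


section Patterns

variable {α β : Type*} (C : SimpleGraph α) (Dβ : SimpleGraph β)

/-- property of a pair of subgraphs: components isomorphic to the two patterns -/
def PairProp {V : Type*} {G : SimpleGraph V} (p : G.Subgraph × G.Subgraph) : Prop :=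
  Nonempty (p.1.coe ≃g C) ∧ Nonempty (p.2.coe ≃g Dβ)

/-- number of pattern pairs whose vertex union has `k` elements -/
noncomputable def pcnt (G : SimpleGraph V) (k : ℕ) : ℕ :=
  Nat.card {p : G.Subgraph × G.Subgraph //
    PairProp C Dβ p ∧ (p.1.verts ∪ p.2.verts).ncard = k}

/-- total number of pattern pairs -/
noncomputable def ptot (G : SimpleGraph V) : ℕ :=
  Nat.card {p : G.Subgraph × G.Subgraph // PairProp C Dβ p}

lemma pairProp_map_iff (f : G →g G') (hf : Function.Injective f)
    (p : G.Subgraph × G.Subgraph) :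
    PairProp C Dβ (p.1.map f, p.2.map f) ↔ PairProp C Dβ p := by
  unfold PairProp
  rw [nonempty_coe_iso_map C f hf, nonempty_coe_iso_map Dβ f hf]

lemma pcnt_iso (e : G ≃g G') (k : ℕ) : pcnt C Dβ G k = pcnt C Dβ G' k := by
  apply Nat.card_congr
  refine Equiv.subtypeEquiv
    (Equiv.prodCongr (subgraphIsoEquiv e) (subgraphIsoEquiv e)) fun p => ?_
  have hinj : Function.Injective ⇑e.toHom := fun a b h => e.toEquiv.injective h
  constructor
  · rintro ⟨hp, hk⟩
    exact ⟨(pairProp_map_iff C Dβ e.toHom hinj p).mpr hp,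
      by rw [show ((Equiv.prodCongr (subgraphIsoEquiv e) (subgraphIsoEquiv e)) p) =
          (p.1.map e.toHom, p.2.map e.toHom) from rfl, map_union_ncard e.toHom hinj, hk]⟩
  · rintro ⟨hp, hk⟩
    exact ⟨(pairProp_map_iff C Dβ e.toHom hinj p).mp hp,
      by rw [← map_union_ncard e.toHom hinj p.1 p.2]; exact hk⟩

lemma ptot_iso (e : G ≃g G') : ptot C Dβ G = ptot C Dβ G' := by
  apply Nat.card_congr
  refine Equiv.subtypeEquiv
    (Equiv.prodCongr (subgraphIsoEquiv e) (subgraphIsoEquiv e)) fun p => ?_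
  have hinj : Function.Injective ⇑e.toHom := fun a b h => e.toEquiv.injective h
  exact (pairProp_map_iff C Dβ e.toHom hinj p).symm

end Patterns


lemma nat_card_sigma {ι : Type*} [Fintype ι] (f : ι → Type*) [∀ i, Finite (f i)] :
    Nat.card (Σ i, f i) = ∑ i, Nat.card (f i) := by
  letI : ∀ i, Fintype (f i) := fun i => Fintype.ofFinite _
  rw [Nat.card_eq_fintype_card, Fintype.card_sigma]
  simp [Nat.card_eq_fintype_card]

/-- counting a type by the fibers of a map to a fintype -/
lemma nat_card_eq_sum_fibers {T ι : Type*} [Fintype ι] [Finite T] (f : T → ι) :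
    Nat.card T = ∑ i, Nat.card {t : T // f t = i} :=
  (Nat.card_congr (Equiv.sigmaFiberEquiv f).symm).trans (nat_card_sigma _)

section Patterns
variable {α β : Type*} (C : SimpleGraph α) (Dβ : SimpleGraph β)
variable {V : Type*} {G : SimpleGraph V}

/-- pairs in `G` avoiding `v` correspond to pairs in `G - v` -/
noncomputable def delEquiv (G : SimpleGraph V) (S : Set V) (k : ℕ) :
    {p : G.Subgraph × G.Subgraph // (PairProp C Dβ p ∧ (p.1.verts ∪ p.2.verts).ncard = k)
        ∧ p.1.verts ⊆ S ∧ p.2.verts ⊆ S} ≃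
    {p : (G.induce S).Subgraph × (G.induce S).Subgraph //
        PairProp C Dβ p ∧ (p.1.verts ∪ p.2.verts).ncard = k} := by
  classical
  set F := induceSubgraphEquiv G S with hF
  set f := (Embedding.induce S : G.induce S ↪g G).toHom with hf
  have hinj : Function.Injective ⇑f := Subtype.val_injective
  have key : ∀ (B : (G.induce S).Subgraph × (G.induce S).Subgraph),
      (PairProp C Dβ (B.1.map f, B.2.map f) ∧
        ((B.1.map f).verts ∪ (B.2.map f).verts).ncard = k) ↔
      (PairProp C Dβ B ∧ (B.1.verts ∪ B.2.verts).ncard = k) := by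
    intro B
    rw [pairProp_map_iff C Dβ f hinj, map_union_ncard f hinj]
  refine
    { toFun := fun p =>
        ⟨(F.symm ⟨p.1.1, p.2.2.1⟩, F.symm ⟨p.1.2, p.2.2.2⟩), ?_⟩
      invFun := fun q =>
        ⟨((F q.1.1).1, (F q.1.2).1), ?_, (F q.1.1).2, (F q.1.2).2⟩
      left_inv := ?_
      right_inv := ?_ }
  · -- property for toFun
    obtain ⟨⟨hp, hk⟩, h1, h2⟩ := p.2
    have e1 : (F.symm ⟨p.1.1, h1⟩).map f = p.1.1 :=
      congrArg Subtype.val (F.apply_symm_apply ⟨p.1.1, h1⟩)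
    have e2 : (F.symm ⟨p.1.2, h2⟩).map f = p.1.2 :=
      congrArg Subtype.val (F.apply_symm_apply ⟨p.1.2, h2⟩)
    refine (key (F.symm ⟨p.1.1, h1⟩, F.symm ⟨p.1.2, h2⟩)).mp ?_
    simp only [e1, e2]
    exact ⟨hp, hk⟩
  · -- property for invFun
    exact (key q.1).mpr q.2
  · intro p
    apply Subtype.ext
    refine Prod.ext ?_ ?_ <;> simp only <;>
      exact congrArg Subtype.val (F.apply_symm_apply _)
  · intro q
    apply Subtype.ext
    refine Prod.ext ?_ ?_ <;> simp only <;>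
      exact F.symm_apply_apply _

end Patterns

section Patterns2
variable {α β : Type*} (C : SimpleGraph α) (Dβ : SimpleGraph β)
variable {V : Type*} {G : SimpleGraph V}

lemma sum_pcnt_induce [Fintype V] (G : SimpleGraph V) (k : ℕ) :
    ∑ v : V, pcnt C Dβ (G.induce {u | u ≠ v}) k
      = (Fintype.card V - k) * pcnt C Dβ G k := by
  classical
  set P : G.Subgraph × G.Subgraph → Prop :=
    fun p => PairProp C Dβ p ∧ (p.1.verts ∪ p.2.verts).ncard = k with hP
  set M := {q : V × (G.Subgraph × G.Subgraph) //
    P q.2 ∧ q.1 ∉ q.2.1.verts ∪ q.2.2.verts} with hM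
  have h1 : Nat.card M = ∑ v : V, pcnt C Dβ (G.induce {u | u ≠ v}) k := by
    rw [nat_card_eq_sum_fibers (fun q : M => q.1.1)]
    refine Finset.sum_congr rfl fun v _ => ?_
    apply Nat.card_congr
    refine Equiv.trans
      (?_ : _ ≃ {p : G.Subgraph × G.Subgraph // P p ∧ v ∉ p.1.verts ∪ p.2.verts})
      (Equiv.trans (Equiv.subtypeEquivRight ?_) (delEquiv C Dβ G {u | u ≠ v} k))
    · exact
        { toFun := fun q => ⟨q.1.1.2, q.1.2.1, by
            have h := q.1.2.2; rwa [q.2] at h⟩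
          invFun := fun p => ⟨⟨(v, p.1), p.2.1, p.2.2⟩, rfl⟩
          left_inv := fun q => by
            apply Subtype.ext; apply Subtype.ext
            exact Prod.ext q.2.symm rfl
          right_inv := fun p => rfl }
    · intro p
      constructor
      · rintro ⟨hp, hv⟩
        refine ⟨hp, fun x hx hxv => hv ?_, fun x hx hxv => hv ?_⟩
        · exact hxv ▸ Set.mem_union_left _ hx
        · exact hxv ▸ Set.mem_union_right _ hx
      · rintro ⟨hp, h1, h2⟩
        refine ⟨hp, fun hv => ?_⟩
        rcases hv with h | h
        · exact h1 h rfl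
        · exact h2 h rfl
  have h2 : Nat.card M = pcnt C Dβ G k * (Fintype.card V - k) := by
    letI : Fintype {p : G.Subgraph × G.Subgraph // P p} := Fintype.ofFinite _
    rw [nat_card_eq_sum_fibers
      (fun q : M => (⟨q.1.2, q.2.1⟩ : {p : G.Subgraph × G.Subgraph // P p}))]
    have hfib : ∀ p : {p : G.Subgraph × G.Subgraph // P p},
        Nat.card {q : M //
          (⟨q.1.2, q.2.1⟩ : {p : G.Subgraph × G.Subgraph // P p}) = p}
          = Fintype.card V - k := by
      intro p
      have e : {q : M //
          (⟨q.1.2, q.2.1⟩ : {p : G.Subgraph × G.Subgraph // P p}) = p} ≃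
          ↥((p.1.1.verts ∪ p.1.2.verts)ᶜ) :=
        { toFun := fun q => ⟨q.1.1.1, by
            have h := q.1.2.2
            have hv : q.1.1.2 = p.1 := congrArg Subtype.val q.2
            rw [hv] at h; exact h⟩
          invFun := fun v => ⟨⟨(v.1, p.1), p.2, v.2⟩, Subtype.ext rfl⟩
          left_inv := fun q => by
            apply Subtype.ext; apply Subtype.ext
            exact Prod.ext rfl (congrArg Subtype.val q.2).symm
          right_inv := fun v => rfl }
      rw [Nat.card_congr e, Nat.card_coe_set_eq]
      have hs : (p.1.1.verts ∪ p.1.2.verts).ncard = k := p.2.2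
      have hc := Set.ncard_add_ncard_compl (p.1.1.verts ∪ p.1.2.verts)
      rw [hs, Nat.card_eq_fintype_card] at hc
      omega
    rw [Finset.sum_congr rfl fun p _ => hfib p, Finset.sum_const,
      Finset.card_univ, smul_eq_mul]
    congr 1
    rw [pcnt, Nat.card_eq_fintype_card]
  rw [← h1, h2, Nat.mul_comm]

end Patterns2

section Patterns3
variable {α β : Type*} (C : SimpleGraph α) (Dβ : SimpleGraph β)
variable {V W : Type*} [Fintype V] [Fintype W]

lemma pcnt_hypo (G : SimpleGraph V) (H : SimpleGraph W) (hhyp : Hypomorphic G H)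
    (k : ℕ) (hk : k < Fintype.card V) :
    pcnt C Dβ G k = pcnt C Dβ H k := by
  obtain ⟨r, hr⟩ := hhyp
  have hcard : Fintype.card W = Fintype.card V := (Fintype.card_congr r).symm
  have hsum : ∑ v : V, pcnt C Dβ (G.induce {u | u ≠ v}) k
      = ∑ w : W, pcnt C Dβ (H.induce {u | u ≠ w}) k := by
    rw [← Equiv.sum_comp r (fun w => pcnt C Dβ (H.induce {u | u ≠ w}) k)]
    exact Finset.sum_congr rfl fun v _ => pcnt_iso C Dβ (hr v).some k
  rw [sum_pcnt_induce, sum_pcnt_induce, hcard] at hsum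
  exact Nat.eq_of_mul_eq_mul_left (Nat.sub_pos_of_lt hk) hsum

lemma ptot_eq_sum (G : SimpleGraph V) :
    ptot C Dβ G = ∑ k ∈ Finset.range (Fintype.card V + 1), pcnt C Dβ G k := by
  classical
  have hbd : ∀ p : {p : G.Subgraph × G.Subgraph // PairProp C Dβ p},
      (p.1.1.verts ∪ p.1.2.verts).ncard < Fintype.card V + 1 := by
    intro p
    have := Set.ncard_le_ncard (Set.subset_univ (p.1.1.verts ∪ p.1.2.verts))
      Set.finite_univ
    rw [Set.ncard_univ, Nat.card_eq_fintype_card] at this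
    omega
  rw [ptot, nat_card_eq_sum_fibers
    (fun p : {p : G.Subgraph × G.Subgraph // PairProp C Dβ p} =>
      (⟨(p.1.1.verts ∪ p.1.2.verts).ncard, hbd p⟩ : Fin (Fintype.card V + 1)))]
  rw [← Fin.sum_univ_eq_sum_range (fun k => pcnt C Dβ G k)]
  refine Finset.sum_congr rfl fun i _ => ?_
  apply Nat.card_congr
  exact
    { toFun := fun q => ⟨q.1.1, q.1.2, congrArg Fin.val q.2⟩
      invFun := fun p => ⟨⟨p.1, p.2.1⟩, Fin.ext p.2.2⟩
      left_inv := fun q => by apply Subtype.ext; rfl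
      right_inv := fun p => rfl }

lemma ptot_eq_mul (G : SimpleGraph V) :
    ptot C Dβ G = subCount G C * subCount G Dβ := by
  rw [ptot, subCount, subCount, ← Nat.card_prod]
  apply Nat.card_congr
  exact
    { toFun := fun p => (⟨p.1.1, p.2.1⟩, ⟨p.1.2, p.2.2⟩)
      invFun := fun q => ⟨(q.1.1, q.2.1), q.1.2, q.2.2⟩
      left_inv := fun p => rfl
      right_inv := fun q => rfl }

/-- the empty subgraph is isomorphic to the empty graph -/
noncomputable def botEmptyIso (G : SimpleGraph V) :
    (⊥ : G.Subgraph).coe ≃g (⊥ : SimpleGraph Empty) :=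
  haveI : IsEmpty ((⊥ : G.Subgraph).verts : Set V) :=
    Set.isEmpty_coe_sort.mpr Subgraph.verts_bot
  { toEquiv := Equiv.equivEmpty _
    map_rel_iff' := fun {a b} => isEmptyElim a }

lemma eq_bot_of_iso_empty {G : SimpleGraph V} {B : G.Subgraph}
    (h : Nonempty (B.coe ≃g (⊥ : SimpleGraph Empty))) : B = ⊥ := by
  obtain ⟨i⟩ := h
  haveI : IsEmpty (B.verts : Set V) := i.toEquiv.isEmpty
  have hempty : B.verts = ∅ := Set.isEmpty_coe_sort.mp this
  ext x y
  · simp [hempty]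
  · constructor
    · intro h
      exact absurd (B.edge_vert h) (by simp [hempty])
    · intro h
      exact h.elim

lemma subCount_eq_pcnt (G : SimpleGraph V) :
    subCount G C = pcnt C (⊥ : SimpleGraph Empty) G (Nat.card α) := by
  apply Nat.card_congr
  exact
    { toFun := fun A => ⟨(A.1, ⊥), ⟨A.2, ⟨botEmptyIso G⟩⟩, by
        rw [Subgraph.verts_bot, Set.union_empty, ← Nat.card_coe_set_eq]
        exact Nat.card_congr A.2.some.toEquiv⟩
      invFun := fun p => ⟨p.1.1, p.2.1.1⟩
      left_inv := fun A => rfl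
      right_inv := fun p => by
        apply Subtype.ext
        exact Prod.ext rfl (eq_bot_of_iso_empty p.2.1.2).symm }

lemma subCount_hypo (G : SimpleGraph V) (H : SimpleGraph W)
    (hhyp : Hypomorphic G H) (hα : Nat.card α < Fintype.card V) :
    subCount G C = subCount H C := by
  rw [subCount_eq_pcnt C G, subCount_eq_pcnt C H,
    pcnt_hypo C (⊥ : SimpleGraph Empty) G H hhyp (Nat.card α) hα]

lemma pcnt_top_eq (G : SimpleGraph V) (H : SimpleGraph W) (hhyp : Hypomorphic G H)
    (hα : Nat.card α < Fintype.card V) (hβ : Nat.card β < Fintype.card V) :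
    pcnt C Dβ G (Fintype.card V) = pcnt C Dβ H (Fintype.card V) := by
  have hcard : Fintype.card W = Fintype.card V := (Fintype.card_congr hhyp.choose).symm
  have htot : ptot C Dβ G = ptot C Dβ H := by
    rw [ptot_eq_mul, ptot_eq_mul, subCount_hypo C G H hhyp hα,
      subCount_hypo Dβ G H hhyp hβ]
  rw [ptot_eq_sum, ptot_eq_sum, hcard, Finset.sum_range_succ,
    Finset.sum_range_succ] at htot
  rw [Finset.sum_congr rfl fun k hk =>
    pcnt_hypo C Dβ G H hhyp k (Finset.mem_range.mp hk)] at htot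
  exact Nat.add_left_cancel htot

end Patterns3

section Splits
variable {α β : Type*} (C : SimpleGraph α) (Dβ : SimpleGraph β)

/-- splittings of a graph into two pattern halves with no cross edges -/
def SplitsTo {T : Type*} (E : SimpleGraph T) : Type _ :=
  {Y : Set T // (∀ a b, E.Adj a b → (a ∈ Y ↔ b ∈ Y)) ∧
    Nonempty (E.induce Y ≃g C) ∧ Nonempty (E.induce Yᶜ ≃g Dβ)}

instance splitsToFinite {T : Type*} [Finite T] (E : SimpleGraph T) :
    Finite (SplitsTo C Dβ E) := by
  unfold SplitsTo; exact Subtype.finite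

/-- transporting an induced subgraph along an isomorphism -/
noncomputable def induceIsoOfIso {T T' : Type*} {E : SimpleGraph T} {E' : SimpleGraph T'}
    (φ : E ≃g E') (s : Set T) : E.induce s ≃g E'.induce (⇑φ '' s) where
  toEquiv := Equiv.Set.image ⇑φ s φ.toEquiv.injective
  map_rel_iff' := by
    rintro ⟨a, ha⟩ ⟨b, hb⟩
    exact φ.map_rel_iff

/-- the splittings of isomorphic graphs are equivalent -/
noncomputable def splitsToEquiv {T T' : Type*} {E : SimpleGraph T} {E' : SimpleGraph T'}
    (φ : E ≃g E') : SplitsTo C Dβ E ≃ SplitsTo C Dβ E' := by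
  unfold SplitsTo
  refine Equiv.subtypeEquiv (Equiv.Set.congr φ.toEquiv) fun Y => ?_
  have himg : Equiv.Set.congr φ.toEquiv Y = ⇑φ '' Y := rfl
  rw [himg]
  have hmem : ∀ (s : Set T) (a : T'), a ∈ ⇑φ '' s ↔ φ.symm a ∈ s := by
    intro s a
    exact Set.mem_image_equiv (f := φ.toEquiv)
  have hcompl : (⇑φ '' Y)ᶜ = ⇑φ '' Yᶜ := (Set.image_compl_eq φ.toEquiv.bijective).symm
  constructor
  · rintro ⟨hcl, h1, h2⟩
    refine ⟨?_, ?_, ?_⟩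
    · intro a b hab
      rw [hmem, hmem]
      exact hcl _ _ (φ.symm.map_rel_iff.mpr (by simpa using hab))
    · exact ⟨(induceIsoOfIso φ Y).symm.trans h1.some⟩
    · rw [hcompl]
      exact ⟨(induceIsoOfIso φ Yᶜ).symm.trans h2.some⟩
  · rintro ⟨hcl, h1, h2⟩
    refine ⟨?_, ?_, ?_⟩
    · intro a b hab
      have := hcl (φ a) (φ b) (φ.map_rel_iff.mpr hab)
      rw [hmem, hmem] at this
      simpa using this
    · exact ⟨(induceIsoOfIso φ Y).trans h1.some⟩
    · rw [hcompl] at h2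
      exact ⟨(induceIsoOfIso φ Yᶜ).trans h2.some⟩

end Splits

section Sup
variable {V U : Type*} {G : SimpleGraph V}

lemma induce_sup_eq_left {A B S : G.Subgraph} (hsup : A ⊔ B = S)
    (hdisj : Disjoint A.verts B.verts) : S.induce A.verts = A := by
  ext x y
  · exact Iff.rfl
  · constructor
    · rintro ⟨hx, hy, hS⟩
      rw [← hsup] at hS
      rcases hS with h | h
      · exact h
      · exact absurd hx (Set.disjoint_right.mp hdisj (B.edge_vert h))
    · intro h
      exact ⟨A.edge_vert h, A.edge_vert (A.adj_symm h), hsup ▸ Or.inl h⟩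

/-- coercion of an induced subgraph of a subgraph -/
noncomputable def induceCoeIso (S : G.Subgraph) (Y : Set S.verts) :
    S.coe.induce Y ≃g (S.induce (Subtype.val '' Y)).coe where
  toEquiv := Equiv.Set.image Subtype.val Y Subtype.val_injective
  map_rel_iff' := by
    rintro ⟨⟨a, haS⟩, ha⟩ ⟨⟨b, hbS⟩, hb⟩
    constructor
    · rintro ⟨-, -, h⟩
      exact h
    · intro h
      exact ⟨⟨⟨a, haS⟩, ha, rfl⟩, ⟨⟨b, hbS⟩, hb, rfl⟩, h⟩

/-- the key isomorphism: a disjoint pair of subgraphs isomorphic to the two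
sides of a split is isomorphic to the split graph -/
noncomputable def supCoeIso (D : SimpleGraph U) (X : Set U)
    (hcl : ∀ a b, D.Adj a b → (a ∈ X ↔ b ∈ X))
    {A B : G.Subgraph} (hdisj : Disjoint A.verts B.verts)
    (iA : A.coe ≃g D.induce X) (iB : B.coe ≃g D.induce Xᶜ) :
    (A ⊔ B).coe ≃g D := by
  classical
  have hAmem : ∀ x : V, x ∈ A.verts → x ∉ B.verts :=
    fun x hx hy => Set.disjoint_left.mp hdisj hx hy
  let e2 : ↥(A.verts ∪ B.verts) ≃ ↥A.verts ⊕ ↥B.verts := Equiv.Set.union hdisj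
  let e3 : ↥A.verts ⊕ ↥B.verts ≃ ↥X ⊕ ↥Xᶜ := Equiv.sumCongr iA.toEquiv iB.toEquiv
  let e4 : ↥X ⊕ ↥Xᶜ ≃ U := Equiv.Set.sumCompl X
  have hverts : (A ⊔ B).verts = A.verts ∪ B.verts := rfl
  let χ : ↥(A ⊔ B).verts ≃ U := (e2.trans e3).trans e4
  have hχA : ∀ (x : ↥(A ⊔ B).verts) (hx : ↑x ∈ A.verts),
      χ x = ↑(iA ⟨↑x, hx⟩) := by
    intro x hx
    show e4 (e3 (e2 x)) = _
    rw [show e2 x = Sum.inl ⟨↑x, hx⟩ from Equiv.Set.union_apply_left hdisj hx]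
    rfl
  have hχB : ∀ (x : ↥(A ⊔ B).verts) (hx : ↑x ∈ B.verts),
      χ x = ↑(iB ⟨↑x, hx⟩) := by
    intro x hx
    show e4 (e3 (e2 x)) = _
    rw [show e2 x = Sum.inr ⟨↑x, hx⟩ from Equiv.Set.union_apply_right hdisj hx]
    rfl
  refine ⟨χ, ?_⟩
  rintro x y
  have hx : ↑x ∈ A.verts ∨ ↑x ∈ B.verts := x.2
  have hy : ↑y ∈ A.verts ∨ ↑y ∈ B.verts := y.2
  have hsupadj : ∀ a b : ↥(A ⊔ B).verts,
      (A ⊔ B).coe.Adj a b ↔ A.Adj ↑a ↑b ∨ B.Adj ↑a ↑b := fun a b => Iff.rfl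
  rcases hx with hxA | hxB
  · rcases hy with hyA | hyA
    · -- both in A
      rw [hsupadj, hχA x hxA, hχA y hyA]
      constructor
      · intro h
        left
        have : (D.induce X).Adj (iA ⟨↑x, hxA⟩) (iA ⟨↑y, hyA⟩) := h
        exact iA.map_rel_iff.mp this
      · rintro (h | h)
        · exact iA.map_rel_iff.mpr h
        · exact absurd (B.edge_vert h) (hAmem _ hxA)
    · -- x in A, y in B : no adjacency
      rw [hsupadj, hχA x hxA, hχB y hyA]
      constructor
      · intro h
        have hX1 : (↑(iA ⟨↑x, hxA⟩) : U) ∈ X := (iA ⟨↑x, hxA⟩).2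
        have hX2 : (↑(iB ⟨↑y, hyA⟩) : U) ∈ Xᶜ := (iB ⟨↑y, hyA⟩).2
        exact absurd ((hcl _ _ h).mp hX1) hX2
      · rintro (h | h)
        · exact absurd (A.edge_vert (A.adj_symm h)) (fun hh => hAmem _ hh hyA)
        · exact absurd (B.edge_vert h) (hAmem _ hxA)
  · rcases hy with hyA | hyB
    · rw [hsupadj, hχB x hxB, hχA y hyA]
      constructor
      · intro h
        have hX1 : (↑(iB ⟨↑x, hxB⟩) : U) ∈ Xᶜ := (iB ⟨↑x, hxB⟩).2
        have hX2 : (↑(iA ⟨↑y, hyA⟩) : U) ∈ X := (iA ⟨↑y, hyA⟩).2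
        exact absurd ((hcl _ _ h).mpr hX2) hX1
      · rintro (h | h)
        · exact absurd (A.edge_vert h) (fun hh => hAmem _ hh hxB)
        · exact absurd (B.edge_vert (B.adj_symm h)) (fun hh => hAmem _ hyA hh)
    · rw [hsupadj, hχB x hxB, hχB y hyB]
      constructor
      · intro h
        right
        have : (D.induce Xᶜ).Adj (iB ⟨↑x, hxB⟩) (iB ⟨↑y, hyB⟩) := h
        exact iB.map_rel_iff.mp this
      · rintro (h | h)
        · exact absurd (A.edge_vert h) (fun hh => hAmem _ hh hxB)
        · exact iB.map_rel_iff.mpr h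

end Sup

section Master
variable {V U : Type*}

lemma pair_disjoint_of_ncard [Fintype U] [Fintype V] {G : SimpleGraph V}
    (D : SimpleGraph U) (X : Set U) {A B : G.Subgraph}
    (hA : Nonempty (A.coe ≃g D.induce X)) (hB : Nonempty (B.coe ≃g D.induce Xᶜ))
    (hk : (A.verts ∪ B.verts).ncard = Fintype.card U) :
    Disjoint A.verts B.verts := by
  classical
  have ncA : A.verts.ncard = Nat.card ↥X := by
    rw [← Nat.card_coe_set_eq]; exact Nat.card_congr hA.some.toEquiv
  have ncB : B.verts.ncard = Nat.card ↥Xᶜ := by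
    rw [← Nat.card_coe_set_eq]; exact Nat.card_congr hB.some.toEquiv
  have hαβ : Nat.card ↥X + Nat.card ↥Xᶜ = Fintype.card U := by
    rw [← Nat.card_sum, Nat.card_congr (Equiv.Set.sumCompl X), Nat.card_eq_fintype_card]
  have h2 := Set.ncard_union_add_ncard_inter A.verts B.verts (Set.toFinite _) (Set.toFinite _)
  rw [hk, ncA, ncB, hαβ] at h2
  have h3 : (A.verts ∩ B.verts).ncard = 0 := by omega
  rw [Set.ncard_eq_zero (Set.toFinite _)] at h3
  exact Set.disjoint_iff_inter_eq_empty.mpr h3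

lemma pcnt_eq_splits_mul [Fintype U] [Fintype V] (D : SimpleGraph U) (G : SimpleGraph V)
    (X : Set U) (hcl : ∀ a b, D.Adj a b → (a ∈ X ↔ b ∈ X)) :
    pcnt (D.induce X) (D.induce Xᶜ) G (Fintype.card U)
      = Nat.card (SplitsTo (D.induce X) (D.induce Xᶜ) D) * subCount G D := by
  classical
  letI : Fintype {S : G.Subgraph // Nonempty (S.coe ≃g D)} := Fintype.ofFinite _
  set T := {p : G.Subgraph × G.Subgraph //
      PairProp (D.induce X) (D.induce Xᶜ) p ∧
        (p.1.verts ∪ p.2.verts).ncard = Fintype.card U} with hT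
  set π : T → {S : G.Subgraph // Nonempty (S.coe ≃g D)} := fun q =>
    ⟨q.1.1 ⊔ q.1.2, ⟨supCoeIso D X hcl
      (pair_disjoint_of_ncard D X q.2.1.1 q.2.1.2 q.2.2)
      q.2.1.1.some q.2.1.2.some⟩⟩ with hπ
  rw [pcnt, nat_card_eq_sum_fibers π]
  have hfib : ∀ Sb : {S : G.Subgraph // Nonempty (S.coe ≃g D)},
      Nat.card {q : T // π q = Sb}
        = Nat.card (SplitsTo (D.induce X) (D.induce Xᶜ) D) := by
    intro Sb
    obtain ⟨S, hS⟩ := Sb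
    have hScard : S.verts.ncard = Fintype.card U := by
      rw [← Nat.card_coe_set_eq, Nat.card_congr hS.some.toEquiv,
        Nat.card_eq_fintype_card]
    rw [← Nat.card_congr (splitsToEquiv (D.induce X) (D.induce Xᶜ) hS.some)]
    apply Nat.card_congr
    -- fiber ≃ SplitsTo (S.coe)
    refine
      { toFun := fun q => ⟨Subtype.val ⁻¹' q.1.1.1.verts, ?_⟩
        invFun := fun Yd => ⟨⟨(S.induce (Subtype.val '' Yd.1),
            S.induce (Subtype.val '' Yd.1ᶜ)), ?_⟩, ?_⟩
        left_inv := ?_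
        right_inv := ?_ }
    · -- toFun property
      obtain ⟨⟨p, hp, hk⟩, hq⟩ := q
      obtain ⟨A, B⟩ := p
      have hsup : A ⊔ B = S := congrArg Subtype.val hq
      have hdisj : Disjoint A.verts B.verts :=
        pair_disjoint_of_ncard D X hp.1 hp.2 hk
      have hmemS : ∀ a : ↥S.verts, ↑a ∈ A.verts ∨ ↑a ∈ B.verts := by
        intro a
        have h' : (↑a : V) ∈ (A ⊔ B).verts := by rw [hsup]; exact a.2
        exact h'
      have himg : Subtype.val '' (Subtype.val ⁻¹' A.verts : Set ↥S.verts) = A.verts := by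
        rw [Set.image_preimage_eq_inter_range, Subtype.range_coe]
        exact Set.inter_eq_self_of_subset_left (hsup ▸ Subgraph.verts_mono
          (le_sup_left : A ≤ A ⊔ B))
      have hYc : (Subtype.val ⁻¹' A.verts : Set ↥S.verts)ᶜ = Subtype.val ⁻¹' B.verts := by
        ext a
        simp only [Set.mem_compl_iff, Set.mem_preimage]
        constructor
        · intro h
          rcases hmemS a with h' | h'
          · exact absurd h' h
          · exact h'
        · intro h hA'
          exact Set.disjoint_left.mp hdisj hA' h
      have himgc : Subtype.val '' ((Subtype.val ⁻¹' A.verts : Set ↥S.verts)ᶜ) = B.verts := by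
        rw [hYc, Set.image_preimage_eq_inter_range, Subtype.range_coe]
        exact Set.inter_eq_self_of_subset_left (hsup ▸ Subgraph.verts_mono
          (le_sup_right : B ≤ A ⊔ B))
      have hindA : S.induce (Subtype.val '' (Subtype.val ⁻¹' A.verts : Set ↥S.verts)) = A := by
        rw [himg]; exact induce_sup_eq_left hsup hdisj
      have hindB : S.induce (Subtype.val '' ((Subtype.val ⁻¹' A.verts : Set ↥S.verts)ᶜ)) = B := by
        rw [himgc]
        exact induce_sup_eq_left (sup_comm A B ▸ hsup) hdisj.symm
      refine ⟨?_, ⟨?_⟩, ⟨?_⟩⟩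
      · -- edge-closed
        intro a b hab
        have hab' : (A ⊔ B).Adj ↑a ↑b := by rw [hsup]; exact hab
        simp only [Set.mem_preimage]
        rcases hab' with h | h
        · exact ⟨fun _ => A.edge_vert (A.adj_symm h), fun _ => A.edge_vert h⟩
        · constructor
          · intro hA'
            exact absurd hA' (Set.disjoint_right.mp hdisj (B.edge_vert h))
          · intro hB'
            exact absurd hB' (Set.disjoint_right.mp hdisj (B.edge_vert (B.adj_symm h)))
      · exact (induceCoeIso S _).trans (hindA.symm ▸ hp.1.some)
      · exact (induceCoeIso S _).trans (hindB.symm ▸ hp.2.some)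
    · -- invFun : PairProp and ncard
      obtain ⟨Y, hclY, h1, h2⟩ := Yd
      have hvu : Subtype.val '' Y ∪ Subtype.val '' Yᶜ = S.verts := by
        rw [← Set.image_union, Set.union_compl_self, Set.image_univ, Subtype.range_coe]
      constructor
      · exact ⟨⟨(induceCoeIso S Y).symm.trans h1.some⟩,
          ⟨(induceCoeIso S Yᶜ).symm.trans h2.some⟩⟩
      · show ((Subtype.val '' Y) ∪ (Subtype.val '' Yᶜ)).ncard = _
        rw [hvu, hScard]
    · -- invFun : π = Sb
      obtain ⟨Y, hclY, h1, h2⟩ := Yd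
      apply Subtype.ext
      show S.induce (Subtype.val '' Y) ⊔ S.induce (Subtype.val '' Yᶜ) = S
      ext x y
      · show x ∈ Subtype.val '' Y ∪ Subtype.val '' Yᶜ ↔ x ∈ S.verts
        rw [← Set.image_union, Set.union_compl_self, Set.image_univ, Subtype.range_coe]
      · constructor
        · rintro (⟨-, -, h⟩ | ⟨-, -, h⟩) <;> exact h
        · intro h
          have hx : x ∈ S.verts := S.edge_vert h
          have hy : y ∈ S.verts := S.edge_vert (S.adj_symm h)
          have hadj : S.coe.Adj ⟨x, hx⟩ ⟨y, hy⟩ := h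
          by_cases hxY : (⟨x, hx⟩ : ↥S.verts) ∈ Y
          · exact Or.inl ⟨⟨⟨x, hx⟩, hxY, rfl⟩,
              ⟨⟨y, hy⟩, (hclY _ _ hadj).mp hxY, rfl⟩, h⟩
          · exact Or.inr ⟨⟨⟨x, hx⟩, hxY, rfl⟩,
              ⟨⟨y, hy⟩, fun hyY => hxY ((hclY _ _ hadj).mpr hyY), rfl⟩, h⟩
    · -- left_inv
      rintro ⟨⟨⟨A, B⟩, hp, hk⟩, hq⟩
      have hsup : A ⊔ B = S := congrArg Subtype.val hq
      have hdisj : Disjoint A.verts B.verts :=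
        pair_disjoint_of_ncard D X hp.1 hp.2 hk
      have hmemS : ∀ a : ↥S.verts, ↑a ∈ A.verts ∨ ↑a ∈ B.verts := by
        intro a
        have h' : (↑a : V) ∈ (A ⊔ B).verts := by rw [hsup]; exact a.2
        exact h'
      have himg : Subtype.val '' (Subtype.val ⁻¹' A.verts : Set ↥S.verts) = A.verts := by
        rw [Set.image_preimage_eq_inter_range, Subtype.range_coe]
        exact Set.inter_eq_self_of_subset_left (hsup ▸ Subgraph.verts_mono
          (le_sup_left : A ≤ A ⊔ B))
      have hYc : (Subtype.val ⁻¹' A.verts : Set ↥S.verts)ᶜ = Subtype.val ⁻¹' B.verts := by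
        ext a
        simp only [Set.mem_compl_iff, Set.mem_preimage]
        constructor
        · intro h
          rcases hmemS a with h' | h'
          · exact absurd h' h
          · exact h'
        · intro h hA'
          exact Set.disjoint_left.mp hdisj hA' h
      have himgc : Subtype.val '' ((Subtype.val ⁻¹' A.verts : Set ↥S.verts)ᶜ) = B.verts := by
        rw [hYc, Set.image_preimage_eq_inter_range, Subtype.range_coe]
        exact Set.inter_eq_self_of_subset_left (hsup ▸ Subgraph.verts_mono
          (le_sup_right : B ≤ A ⊔ B))
      apply Subtype.ext
      apply Subtype.ext
      refine Prod.ext ?_ ?_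
      · show S.induce (Subtype.val '' (Subtype.val ⁻¹' A.verts : Set ↥S.verts)) = A
        rw [himg]; exact induce_sup_eq_left hsup hdisj
      · show S.induce (Subtype.val '' ((Subtype.val ⁻¹' A.verts : Set ↥S.verts)ᶜ)) = B
        rw [himgc]
        exact induce_sup_eq_left (sup_comm A B ▸ hsup) hdisj.symm
    · -- right_inv
      rintro ⟨Y, hclY, h1, h2⟩
      apply Subtype.ext
      show Subtype.val ⁻¹' (Subtype.val '' Y) = Y
      exact Set.preimage_image_eq Y Subtype.val_injective
  rw [Finset.sum_congr rfl fun Sb _ => hfib Sb, Finset.sum_const, Finset.card_univ,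
    smul_eq_mul, subCount, Nat.mul_comm]
  congr 1
  exact Nat.card_eq_fintype_card.symm

end Master
end Recon

open Recon in
/-- Counts of disconnected spanning subgraphs are reconstructible: if `G` and
`H` are hypomorphic on `n ≥ 2` vertices and `D` is a disconnected graph on `n`
vertices, then `⟨G, D⟩ = ⟨H, D⟩`. -/
theorem disconnected_spanning_subCount_reconstructible {V W U : Type*}
    [Fintype V] [Fintype W] [Fintype U]
    (G : SimpleGraph V) (H : SimpleGraph W) (D : SimpleGraph U)
    (hhyp : Hypomorphic G H)
    (hn : 2 ≤ Fintype.card V)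
    (hcard : Fintype.card U = Fintype.card V)
    (hdisc : ¬ D.Connected) :
    subCount G D = subCount H D := by
  classical
  have hUpos : 0 < Fintype.card U := by omega
  haveI hne : Nonempty U := Fintype.card_pos_iff.mp hUpos
  have hpre : ¬ D.Preconnected := fun h => hdisc ⟨h⟩
  rw [Preconnected] at hpre
  push_neg at hpre
  obtain ⟨a, b, hab⟩ := hpre
  set X : Set U := {x | D.Reachable a x} with hX
  have haX : a ∈ X := by exact Reachable.refl a
  have hbX : b ∈ Xᶜ := hab
  have hcl : ∀ x y, D.Adj x y → (x ∈ X ↔ y ∈ X) := by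
    intro x y hxy
    constructor
    · intro hx
      exact Reachable.trans hx hxy.reachable
    · intro hy
      exact Reachable.trans hy hxy.symm.reachable
  have hXc : Nat.card ↥X + Nat.card ↥Xᶜ = Fintype.card U := by
    rw [← Nat.card_sum, Nat.card_congr (Equiv.Set.sumCompl X), Nat.card_eq_fintype_card]
  haveI : Nonempty ↥X := ⟨⟨a, haX⟩⟩
  haveI : Nonempty ↥Xᶜ := ⟨⟨b, hbX⟩⟩
  have hXpos : 0 < Nat.card ↥X := Nat.card_pos
  have hXcpos : 0 < Nat.card ↥Xᶜ := Nat.card_pos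
  have hα : Nat.card ↥X < Fintype.card V := by omega
  have hβ : Nat.card ↥Xᶜ < Fintype.card V := by omega
  have h1 := pcnt_top_eq (D.induce X) (D.induce Xᶜ) G H hhyp hα hβ
  have h2 := pcnt_eq_splits_mul D G X hcl
  have h3 := pcnt_eq_splits_mul D H X hcl
  rw [hcard] at h2 h3
  rw [h2, h3] at h1
  have hd : 0 < Nat.card (SplitsTo (D.induce X) (D.induce Xᶜ) D) := by
    haveI : Nonempty (SplitsTo (D.induce X) (D.induce Xᶜ) D) :=
      ⟨⟨X, hcl, ⟨Iso.refl⟩, ⟨Iso.refl⟩⟩⟩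
    exact Nat.card_pos
  exact Nat.eq_of_mul_eq_mul_left hd h1
end
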